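/- arXiv:0801.1177 — 12 statements merged into one kernel-verified Lean document; each statement's English description precedes it below -/
import Mathlib

section
/- Every coset of the field ideal F = ⟨x_i^2 + x_i : i⟩ in R = MvPolynomial (Fin n) (ZMod 2) contains exactly one Boolean (i.e. multilinear) polynomial; in particular the composition of the inclusion of Boolean polynomials into R with the quotient map R → R/F is a bijection onto R/F. -/
open MvPolynomial

/-- A Boolean (multilinear) polynomial: every variable occurs with exponent ≤ 1
in every monomial of the support. -/
def IsBooleanPoly {n : ℕ} (f : MvPolynomial (Fin n) (ZMod 2)) : Prop :=
  ∀ m ∈ f.support, ∀ i, m i ≤ 1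

/-- The field ideal ⟨x_i² + x_i : i⟩. -/
noncomputable def fieldIdeal (n : ℕ) : Ideal (MvPolynomial (Fin n) (ZMod 2)) :=
  Ideal.span (Set.range fun i : Fin n => X i ^ 2 + X i)

/-- The vanishing ideal of a set of points. -/
noncomputable def pointsVanishingIdeal {n : ℕ} (P : Set (Fin n → ZMod 2)) :
    Ideal (MvPolynomial (Fin n) (ZMod 2)) where
  carrier := {f | ∀ p ∈ P, eval p f = 0}
  add_mem' := by
    intro a b ha hb p hp
    simp [ha p hp, hb p hp]
  zero_mem' := by
    intro p hp
    simp
  smul_mem' := by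
    intro c a ha p hp
    simp [smul_eq_mul, ha p hp]

/-- Strict extended lex order on Boolean polynomials: `p < q` iff the lex-largest
exponent vector in the symmetric difference of the supports belongs to the support of `q`. -/
def ExtLexLt {n : ℕ} (p q : MvPolynomial (Fin n) (ZMod 2)) : Prop :=
  ∃ m ∈ q.support \ p.support, ∀ m' ∈ (symmDiff p.support q.support), toLex m' ≤ toLex m

def ExtLexLe {n : ℕ} (p q : MvPolynomial (Fin n) (ZMod 2)) : Prop :=
  p = q ∨ ExtLexLt p q

/-- `t` is the leading monomial of `f` with respect to the monomial order `m`. -/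
def IsLeadingMonomial {n : ℕ} (m : MonomialOrder (Fin n))
    (f : MvPolynomial (Fin n) (ZMod 2)) (t : Fin n →₀ ℕ) : Prop :=
  t ∈ f.support ∧ ∀ t' ∈ f.support, m.toSyn t' ≤ m.toSyn t

/-- `t` is a standard monomial of the ideal `I` w.r.t. the monomial order `m`:
it is not the leading monomial of any (necessarily nonzero) element of `I`. -/
def IsStdMonomial {n : ℕ} (m : MonomialOrder (Fin n))
    (I : Ideal (MvPolynomial (Fin n) (ZMod 2))) (t : Fin n →₀ ℕ) : Prop :=
  ¬ ∃ f ∈ I, IsLeadingMonomial m f t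


namespace BooleanAux

open MvPolynomial

variable {n : ℕ}

noncomputable abbrev mkF (n : ℕ) : MvPolynomial (Fin n) (ZMod 2) →+*
    MvPolynomial (Fin n) (ZMod 2) ⧸ fieldIdeal n := Ideal.Quotient.mk (fieldIdeal n)

lemma mk_X_pow (i : Fin n) (k : ℕ) : mkF n (X i) ^ (k + 1) = mkF n (X i) := by
  have h2 : mkF n (X i) ^ 2 = mkF n (X i) := by
    rw [← map_pow]
    refine Ideal.Quotient.eq.mpr ?_
    rw [sub_eq_add_neg, CharTwo.neg_eq]
    exact Ideal.subset_span ⟨i, rfl⟩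
  induction k with
  | zero => rw [pow_one]
  | succ k ih => rw [pow_succ, ih, ← pow_two, h2]

/-- Truncation of an exponent vector to exponents ≤ 1. -/
noncomputable def trunc (m : Fin n →₀ ℕ) : Fin n →₀ ℕ :=
  Finsupp.mapRange (fun k => min k 1) (by simp) m

lemma trunc_apply (m : Fin n →₀ ℕ) (i : Fin n) : trunc m i = min (m i) 1 :=
  Finsupp.mapRange_apply

lemma trunc_support (m : Fin n →₀ ℕ) : (trunc m).support = m.support := by
  ext i
  simp only [Finsupp.mem_support_iff, trunc_apply]
  omega

lemma mk_monomial (m : Fin n →₀ ℕ) (c : ZMod 2) :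
    mkF n (monomial m c) = mkF n (monomial (trunc m) c) := by
  rw [monomial_eq, monomial_eq, map_mul, map_mul]
  congr 1
  rw [Finsupp.prod, Finsupp.prod, trunc_support, map_prod, map_prod]
  refine Finset.prod_congr rfl fun i hi => ?_
  have hm : m i ≠ 0 := Finsupp.mem_support_iff.mp hi
  rw [map_pow, map_pow, trunc_apply, min_eq_right (Nat.one_le_iff_ne_zero.mpr hm), pow_one]
  obtain ⟨k, hk⟩ := Nat.exists_eq_add_of_lt (Nat.pos_of_ne_zero hm)
  rw [show m i = k + 1 by omega, mk_X_pow]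

/-- Boolean reduction of a polynomial. -/
noncomputable def red (f : MvPolynomial (Fin n) (ZMod 2)) : MvPolynomial (Fin n) (ZMod 2) :=
  ∑ m ∈ f.support, monomial (trunc m) (coeff m f)

lemma mk_red (f : MvPolynomial (Fin n) (ZMod 2)) : mkF n (red f) = mkF n f := by
  conv_rhs => rw [← f.support_sum_monomial_coeff]
  rw [red, map_sum, map_sum]
  exact Finset.sum_congr rfl fun m _ => (mk_monomial m _).symm

lemma isBooleanPoly_red (f : MvPolynomial (Fin n) (ZMod 2)) : IsBooleanPoly (red f) := by
  intro m' hm' i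
  have : ∃ m ∈ f.support, trunc m = m' := by
    by_contra hc
    push_neg at hc
    apply MvPolynomial.mem_support_iff.mp hm'
    rw [red, coeff_sum]
    exact Finset.sum_eq_zero fun m hm => by rw [coeff_monomial, if_neg (hc m hm)]
  obtain ⟨m, _, rfl⟩ := this
  rw [trunc_apply]
  exact min_le_right _ _

lemma fieldIdeal_le_vanishing :
    fieldIdeal n ≤ pointsVanishingIdeal (Set.univ : Set (Fin n → ZMod 2)) := by
  rw [fieldIdeal, Ideal.span_le]
  rintro _ ⟨i, rfl⟩ p _
  have : ∀ a : ZMod 2, a ^ 2 + a = 0 := by decide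
  simp only [map_add, map_pow, eval_X]
  exact this (p i)

lemma boolean_eq_zero_of_mem {f : MvPolynomial (Fin n) (ZMod 2)}
    (hb : IsBooleanPoly f) (hf : f ∈ fieldIdeal n) : f = 0 := by
  refine eq_zero_of_eval_eq_zero (Fin n) (ZMod 2) f (fun v => fieldIdeal_le_vanishing hf v trivial) ?_
  rw [mem_restrictDegree]
  rw [ZMod.card 2]
  exact hb

lemma boolean_injective {p q : MvPolynomial (Fin n) (ZMod 2)}
    (hp : IsBooleanPoly p) (hq : IsBooleanPoly q)
    (h : mkF n p = mkF n q) : p = q := by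
  have hmem : p - q ∈ fieldIdeal n := Ideal.Quotient.eq.mp h
  have hsub : p - q = p + q := by rw [sub_eq_add_neg, CharTwo.neg_eq]
  have hb : IsBooleanPoly (p - q) := by
    rw [hsub]
    intro m hm i
    rcases Finset.mem_union.mp (MvPolynomial.support_add hm) with h' | h'
    · exact hp m h' i
    · exact hq m h' i
  have := boolean_eq_zero_of_mem hb hmem
  exact sub_eq_zero.mp this

end BooleanAux

/-- Every coset of the field ideal contains exactly one Boolean polynomial;
equivalently, composing the inclusion of Boolean polynomials with the quotient map
is a bijection onto the quotient ring. -/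
theorem booleanPoly_coset_unique_and_bijective (n : ℕ) :
    (∀ c : MvPolynomial (Fin n) (ZMod 2) ⧸ fieldIdeal n,
      ∃! p : MvPolynomial (Fin n) (ZMod 2),
        IsBooleanPoly p ∧ Ideal.Quotient.mk (fieldIdeal n) p = c) ∧
    Function.Bijective
      (fun p : {f : MvPolynomial (Fin n) (ZMod 2) // IsBooleanPoly f} =>
        Ideal.Quotient.mk (fieldIdeal n) p.1) := by
  constructor
  · intro c
    obtain ⟨f, rfl⟩ := Ideal.Quotient.mk_surjective c
    refine ⟨BooleanAux.red f, ⟨BooleanAux.isBooleanPoly_red f, BooleanAux.mk_red f⟩, ?_⟩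
    rintro q ⟨hqb, hq⟩
    exact BooleanAux.boolean_injective hqb (BooleanAux.isBooleanPoly_red f)
      (hq.trans (BooleanAux.mk_red f).symm)
  · constructor
    · rintro ⟨p, hp⟩ ⟨q, hq⟩ h
      exact Subtype.ext (BooleanAux.boolean_injective hp hq h)
    · intro c
      obtain ⟨f, rfl⟩ := Ideal.Quotient.mk_surjective c
      exact ⟨⟨BooleanAux.red f, BooleanAux.isBooleanPoly_red f⟩, BooleanAux.mk_red f⟩
end

section
/- For every subset P of Fin n → ZMod 2, the number of Boolean polynomials f ∈ MvPolynomial (Fin n) (ZMod 2) satisfying f(p) = 0 for all p ∈ P equals 2^(2^n − |P|). -/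
open MvPolynomial

lemma isBooleanPoly_iff_mem {n : ℕ} (f : MvPolynomial (Fin n) (ZMod 2)) :
    IsBooleanPoly f ↔ f ∈ restrictDegree (Fin n) (ZMod 2) (Fintype.card (ZMod 2) - 1) := by
  have h : Fintype.card (ZMod 2) - 1 = 1 := rfl
  rw [h, mem_restrictDegree]
  rfl

/-- The number of Boolean polynomials vanishing on `P` is `2 ^ (2 ^ n - |P|)`. -/
theorem ncard_booleanPoly_vanishing (n : ℕ) (P : Set (Fin n → ZMod 2)) :
    {f : MvPolynomial (Fin n) (ZMod 2) |
        IsBooleanPoly f ∧ ∀ p ∈ P, eval p f = 0}.ncard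
      = 2 ^ (2 ^ n - P.ncard) := by
  classical
  set S := {f : MvPolynomial (Fin n) (ZMod 2) |
      IsBooleanPoly f ∧ ∀ p ∈ P, eval p f = 0} with hS
  set T := {g : (Fin n → ZMod 2) → ZMod 2 | ∀ p ∈ P, g p = 0} with hT
  have hinj : ∀ a b : MvPolynomial (Fin n) (ZMod 2), IsBooleanPoly a → IsBooleanPoly b →
      (∀ v, eval v a = eval v b) → a = b := by
    intro a b ha hb h
    have hmem : a - b ∈ restrictDegree (Fin n) (ZMod 2) (Fintype.card (ZMod 2) - 1) :=
      sub_mem ((isBooleanPoly_iff_mem a).1 ha) ((isBooleanPoly_iff_mem b).1 hb)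
    have hz := eq_zero_of_eval_eq_zero (σ := Fin n) (K := ZMod 2) (a - b)
      (fun v => by rw [map_sub, h v, sub_self]) hmem
    exact sub_eq_zero.mp hz
  have e : S ≃ T := by
    refine Equiv.ofBijective
      (fun f => ⟨fun v => eval v f.1, fun p hp => f.2.2 p hp⟩) ?_
    constructor
    · rintro ⟨a, ha⟩ ⟨b, hb⟩ hab
      have : ∀ v, eval v a = eval v b := fun v =>
        congrFun (congrArg Subtype.val hab) v
      exact Subtype.ext (hinj a b ha.1 hb.1 this)
    · rintro ⟨g, hg⟩
      have hrng : g ∈ LinearMap.range (evalᵢ (Fin n) (ZMod 2)) := by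
        rw [range_evalᵢ]; trivial
      obtain ⟨p', hp'⟩ := hrng
      refine ⟨⟨p'.1, (isBooleanPoly_iff_mem _).2 p'.2, ?_⟩, ?_⟩
      · intro p hp
        have : eval p p'.1 = g p := congrFun hp' p
        rw [this]; exact hg p hp
      · exact Subtype.ext (funext fun v => congrFun hp' v)
  have h1 : S.ncard = T.ncard := by
    rw [← Nat.card_coe_set_eq, ← Nat.card_coe_set_eq, Nat.card_congr e]
  rw [h1]
  have e2 : T ≃ (↥(Pᶜ) → ZMod 2) := by
    refine ⟨fun g x => g.1 x.1,
      fun h => ⟨fun v => if hv : v ∈ P then 0 else h ⟨v, hv⟩, ?_⟩, ?_, ?_⟩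
    · intro p hp; simp [hp]
    · rintro ⟨g, hg⟩
      apply Subtype.ext
      funext v
      by_cases hv : v ∈ P
      · simp [hv, hg v hv]
      · simp [hv]
    · intro h; funext x
      exact dif_neg x.2
  have h2 : (Pᶜ).ncard = 2 ^ n - P.ncard := by
    have h3 := Set.ncard_add_ncard_compl P
    have hcard : Nat.card (Fin n → ZMod 2) = 2 ^ n := by
      simp [Nat.card_eq_fintype_card]
    omega
  have hz2 : Nat.card (ZMod 2) = 2 := by
    simp [Nat.card_eq_fintype_card]
  calc T.ncard = Nat.card T := (Nat.card_coe_set_eq T).symm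
    _ = Nat.card (↥(Pᶜ) → ZMod 2) := Nat.card_congr e2
    _ = Nat.card (ZMod 2) ^ Nat.card ↥(Pᶜ) := Nat.card_fun
    _ = 2 ^ (2 ^ n - P.ncard) := by
        rw [hz2, Nat.card_coe_set_eq, h2]
end

section
/- For every subset P of Fin n → ZMod 2, the quotient ring R/I(P) of R = MvPolynomial (Fin n) (ZMod 2) by the vanishing ideal I(P) has dimension |P| as a vector space over ZMod 2. -/
open MvPolynomial

noncomputable def indicPoly {n : ℕ} (p : Fin n → ZMod 2) : MvPolynomial (Fin n) (ZMod 2) :=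
  ∏ i, (X i + C (p i) + 1)

lemma eval_indicPoly {n : ℕ} (p q : Fin n → ZMod 2) :
    eval q (indicPoly p) = if q = p then 1 else 0 := by
  have key : ∀ a b : ZMod 2, a + b + 1 = if a = b then 1 else 0 := by decide
  simp only [indicPoly, map_prod, map_add, eval_X, eval_C, map_one]
  by_cases h : q = p
  · subst h; simp [key]
  · obtain ⟨i, hi⟩ := Function.ne_iff.mp h
    rw [if_neg h]
    exact Finset.prod_eq_zero (Finset.mem_univ i) (by rw [key]; simp [hi])

noncomputable def evalHomP {n : ℕ} (P : Set (Fin n → ZMod 2)) :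
    MvPolynomial (Fin n) (ZMod 2) →ₐ[ZMod 2] (P → ZMod 2) :=
  Pi.algHom _ _ fun p => aeval (p : Fin n → ZMod 2)

lemma evalHomP_apply {n : ℕ} (P : Set (Fin n → ZMod 2)) (f) (p : P) :
    evalHomP P f p = eval (p : Fin n → ZMod 2) f :=
  DFunLike.congr_fun (coe_aeval_eq_eval (p : Fin n → ZMod 2)) f

lemma evalHomP_surj {n : ℕ} (P : Set (Fin n → ZMod 2)) :
    Function.Surjective (evalHomP P) := by
  classical
  intro g
  haveI : Fintype P := Set.Finite.fintype (Set.toFinite P)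
  refine ⟨∑ p : P, C (g p) * indicPoly (p : Fin n → ZMod 2), ?_⟩
  funext q
  rw [evalHomP_apply]
  simp only [map_sum, map_mul, eval_C, eval_indicPoly]
  rw [Finset.sum_eq_single q]
  · simp
  · intro b _ hb
    rw [if_neg (by exact fun h => hb (Subtype.ext h.symm))]; ring
  · simp

lemma ker_evalHomP {n : ℕ} (P : Set (Fin n → ZMod 2)) :
    RingHom.ker (evalHomP P) = pointsVanishingIdeal P := by
  ext f
  simp only [RingHom.mem_ker]
  constructor
  · intro h p hp
    have := congrFun h ⟨p, hp⟩
    rwa [evalHomP_apply] at this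
  · intro h
    funext p
    rw [evalHomP_apply]
    exact h p p.2

/-- The quotient by the vanishing ideal of `P` has dimension `|P|` over `ZMod 2`. -/
theorem finrank_quotient_pointsVanishingIdeal (n : ℕ) (P : Set (Fin n → ZMod 2)) :
    Module.finrank (ZMod 2)
        (MvPolynomial (Fin n) (ZMod 2) ⧸ pointsVanishingIdeal P) = P.ncard := by
  classical
  haveI : Fintype P := Set.Finite.fintype (Set.toFinite P)
  rw [← ker_evalHomP]
  have e := Ideal.quotientKerAlgEquivOfSurjective (evalHomP_surj P)
  rw [e.toLinearEquiv.finrank_eq, Module.finrank_fintype_fun_eq_card,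
    ← Nat.card_eq_fintype_card, Nat.card_coe_set_eq]
end

section
/- Let > be any monomial order on R = MvPolynomial (Fin n) (ZMod 2) and let P ⊆ (Fin n → ZMod 2). Then the set of standard monomials of the vanishing ideal I(P) with respect to > has cardinality |P|. -/
open MvPolynomial

/-!
Evaluation identifies `R ⧸ I(P)` with the space of functions `P → 𝔽₂`, of dimension `|P|`.
For any ideal `I` and monomial order, the monomials that are not leading monomials of `I`
span a complement of `I`: the multivariate division algorithm, run against all nonzero
elements of `I`, reduces every polynomial modulo `I` to a combination of them, and a nonzero
element of `I` cannot be such a combination since its leading monomial is not standard.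
Hence they form a basis of `R ⧸ I`, and there are `|P|` of them.
-/

section StandardMonomials

variable {σ K : Type*} [Field K] (m : MonomialOrder σ) (I : Ideal (MvPolynomial σ K))

def stdMonomials : Set (σ →₀ ℕ) :=
  {t | ∀ f ∈ I, f ≠ 0 → m.degree f ≠ t}

theorem disjoint_restrictScalars_restrictSupport_stdMonomials :
    Disjoint (I.restrictScalars K) (restrictSupport K (stdMonomials m I)) := by
  rw [Submodule.disjoint_def]
  intro f hfI hfS
  by_contra hf
  exact hfS ((m.degree_mem_support_iff f).mpr hf) f hfI hf rfl

theorem exists_mem_restrictSupport_stdMonomials_sub_mem (f : MvPolynomial σ K) :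
    ∃ r ∈ restrictSupport K (stdMonomials m I), f - r ∈ I := by
  have hunit : ∀ b ∈ (I : Set (MvPolynomial σ K)) \ {0}, IsUnit (m.leadingCoeff b) :=
    fun b hb => (m.leadingCoeff_ne_zero_iff.mpr hb.2).isUnit
  obtain ⟨g, r, hfr, -, hr⟩ := m.div_set hunit f
  refine ⟨r, fun c hc b hbI hb0 hbc => hr c hc b ⟨hbI, hb0⟩ hbc.le, ?_⟩
  rw [hfr, add_sub_cancel_right, Finsupp.linearCombination_apply]
  exact Ideal.sum_mem _ fun b _ => I.mul_mem_left _ b.2.1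

theorem isCompl_restrictScalars_restrictSupport_stdMonomials :
    IsCompl (I.restrictScalars K) (restrictSupport K (stdMonomials m I)) := by
  refine ⟨disjoint_restrictScalars_restrictSupport_stdMonomials m I,
    Submodule.codisjoint_iff_exists_add_eq.mpr fun f => ?_⟩
  obtain ⟨r, hr, hfr⟩ := exists_mem_restrictSupport_stdMonomials_sub_mem m I f
  exact ⟨f - r, r, hfr, hr, sub_add_cancel f r⟩

theorem natCard_stdMonomials :
    Nat.card (stdMonomials m I) = Module.finrank K (MvPolynomial σ K ⧸ I.restrictScalars K) := by
  rw [← Module.finrank_eq_nat_card_basis (basisRestrictSupport K (stdMonomials m I)),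
    (Submodule.quotientEquivOfIsCompl _ _
      (isCompl_restrictScalars_restrictSupport_stdMonomials m I)).finrank_eq]

end StandardMonomials

section Evaluation

variable {σ K : Type*} [Field K] [Fintype K] [Finite σ]

noncomputable def evalOn (P : Set (σ → K)) : MvPolynomial σ K →ₗ[K] (P → K) :=
  (LinearMap.funLeft K K ((↑) : P → σ → K)).comp (evalₗ K σ)

theorem evalOn_surjective (P : Set (σ → K)) : Function.Surjective (evalOn P) := by
  have hrange : LinearMap.range (evalₗ K σ) = ⊤ :=
    top_le_iff.mp (map_restrict_dom_evalₗ K σ ▸ LinearMap.map_le_range)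
  exact (LinearMap.funLeft_surjective_of_injective K K _ Subtype.val_injective).comp
    (LinearMap.range_eq_top.mp hrange)

end Evaluation

theorem ker_evalOn {n : ℕ} (P : Set (Fin n → ZMod 2)) :
    LinearMap.ker (evalOn P) = (pointsVanishingIdeal P).restrictScalars (ZMod 2) := by
  ext f
  simp [evalOn, funext_iff, pointsVanishingIdeal]

theorem isLeadingMonomial_iff {n : ℕ} {m : MonomialOrder (Fin n)}
    {f : MvPolynomial (Fin n) (ZMod 2)} {t : Fin n →₀ ℕ} :
    IsLeadingMonomial m f t ↔ f ≠ 0 ∧ m.degree f = t := by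
  constructor
  · rintro ⟨ht, hmax⟩
    refine ⟨ne_zero_iff.mpr ⟨t, mem_support_iff.mp ht⟩, m.toSyn.injective ?_⟩
    exact le_antisymm (m.degree_le_iff.mpr hmax) (m.le_degree ht)
  · rintro ⟨hf, rfl⟩
    exact ⟨(m.degree_mem_support_iff f).mpr hf, fun _ => m.le_degree⟩

theorem isStdMonomial_iff_mem_stdMonomials {n : ℕ} {m : MonomialOrder (Fin n)}
    {I : Ideal (MvPolynomial (Fin n) (ZMod 2))} {t : Fin n →₀ ℕ} :
    IsStdMonomial m I t ↔ t ∈ stdMonomials m I := by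
  simp [IsStdMonomial, isLeadingMonomial_iff, stdMonomials]

/-- For any monomial order, the set of standard monomials of the vanishing ideal of `P`
has cardinality `|P|`. -/
theorem ncard_stdMonomials_pointsVanishingIdeal (n : ℕ) (m : MonomialOrder (Fin n))
    (P : Set (Fin n → ZMod 2)) :
    {t : Fin n →₀ ℕ | IsStdMonomial m (pointsVanishingIdeal P) t}.ncard = P.ncard := by
  have hstd : {t | IsStdMonomial m (pointsVanishingIdeal P) t} =
      stdMonomials m (pointsVanishingIdeal P) :=
    Set.ext fun _ => isStdMonomial_iff_mem_stdMonomials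
  classical
  rw [hstd, ← Nat.card_coe_set_eq, ← Nat.card_coe_set_eq, natCard_stdMonomials, ← ker_evalOn,
    ((evalOn P).quotKerEquivOfSurjective (evalOn_surjective P)).finrank_eq,
    Module.finrank_fintype_fun_eq_card, Nat.card_eq_fintype_card]
end

section
/- Let I be an ideal of R = MvPolynomial (Fin n) (ZMod 2) containing the field ideal ⟨x_i^2 + x_i : i⟩, and let p ∈ R be a Boolean polynomial. Then the following are equivalent: (1) p is minimal with respect to the extended lex ordering among all Boolean polynomials lying in the coset p + I; (2) every monomial in the support of p is a standard monomial of I with respect to the lexicographic monomial order. -/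
open MvPolynomial

namespace ExtLexAux

variable {n : ℕ}

lemma add_self_poly (a : MvPolynomial (Fin n) (ZMod 2)) : a + a = 0 := by
  have h : (2 : ZMod 2) • a = a + a := two_smul _ a
  rw [show (2 : ZMod 2) = 0 by decide, zero_smul] at h
  exact h.symm

lemma sub_eq_add_poly (a b : MvPolynomial (Fin n) (ZMod 2)) : a - b = a + b := by
  rw [sub_eq_add_neg, neg_eq_of_add_eq_zero_left (add_self_poly b)]

lemma support_add_eq (a b : MvPolynomial (Fin n) (ZMod 2)) :
    (a + b).support = symmDiff a.support b.support := by
  ext m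
  simp only [mem_support_iff, Finset.mem_symmDiff, coeff_add]
  generalize coeff m a = x
  generalize coeff m b = y
  revert x y; decide

/-- squarefree part of an exponent vector -/
noncomputable def sq (m : Fin n →₀ ℕ) : Fin n →₀ ℕ := m.mapRange (fun k => min k 1) (by simp)

@[simp] lemma sq_apply (m : Fin n →₀ ℕ) (i : Fin n) : sq m i = min (m i) 1 := rfl

lemma sq_le (m : Fin n →₀ ℕ) : sq m ≤ m := fun i => by simp [min_le_left]

lemma toLex_sq_le (m : Fin n →₀ ℕ) : toLex (sq m) ≤ toLex m :=
  Finsupp.toLex_monotone (sq_le m)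

lemma sq_eq_self {m : Fin n →₀ ℕ} (h : ∀ i, m i ≤ 1) : sq m = m := by
  ext i; simp [min_eq_left (h i)]

lemma sq_support (m : Fin n →₀ ℕ) : (sq m).support = m.support := by
  ext i; simp only [Finsupp.mem_support_iff, sq_apply]; omega

lemma monomial_sq_sub_mem (m : Fin n →₀ ℕ) (c : ZMod 2) :
    (monomial (sq m) c : MvPolynomial (Fin n) (ZMod 2)) - monomial m c ∈ fieldIdeal n := by
  rw [← Ideal.Quotient.eq]
  set mk := Ideal.Quotient.mk (fieldIdeal n) with hmk
  have hXid : ∀ i : Fin n, (mk (X i)) ^ 2 = mk (X i) := by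
    intro i
    have h0 : mk (X i ^ 2 + X i) = 0 := by
      rw [Ideal.Quotient.eq_zero_iff_mem]
      exact Ideal.subset_span ⟨i, rfl⟩
    have h2 : mk (X i) ^ 2 + mk (X i) = 0 := by
      rw [← map_pow, ← map_add, h0]
    have hyy : mk (X i) + mk (X i) = 0 := by
      rw [← map_add, add_self_poly, map_zero]
    rw [← add_zero ((mk (X i)) ^ 2), ← hyy, ← add_assoc, h2, zero_add]
  have hXpow : ∀ (i : Fin n) (k : ℕ), 1 ≤ k → (mk (X i)) ^ k = mk (X i) := by
    intro i k hk
    induction k with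
    | zero => omega
    | succ k ih =>
      rcases Nat.eq_or_lt_of_le hk with h1 | h1
      · rw [← h1, pow_one]
      · rw [pow_succ, ih (by omega), ← pow_two, hXid]
  rw [monomial_eq, monomial_eq, map_mul, map_mul]
  congr 1
  rw [Finsupp.prod, Finsupp.prod, sq_support]
  rw [map_prod, map_prod]
  apply Finset.prod_congr rfl
  intro i hi
  rw [Finsupp.mem_support_iff] at hi
  rw [map_pow, map_pow, sq_apply, min_eq_right (by omega), pow_one,
    hXpow i (m i) (by omega)]

end ExtLexAux

open ExtLexAux

/-- A Boolean polynomial is extended-lex minimal in its coset modulo an ideal containing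
the field ideal iff all monomials of its support are standard monomials w.r.t. lex. -/
theorem extLex_minimal_iff_support_std (n : ℕ)
    (I : Ideal (MvPolynomial (Fin n) (ZMod 2))) (hI : fieldIdeal n ≤ I)
    (p : MvPolynomial (Fin n) (ZMod 2)) (hp : IsBooleanPoly p) :
    (∀ q : MvPolynomial (Fin n) (ZMod 2),
        IsBooleanPoly q → q - p ∈ I → ExtLexLe p q) ↔
      ∀ t ∈ p.support, IsStdMonomial MonomialOrder.lex I t := by
  constructor
  · -- minimal → standard
    intro hmin t ht
    rintro ⟨f, hfI, htf, hlead⟩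
    -- leading monomial comparisons are in Lex
    have hlead' : ∀ t' ∈ f.support, toLex t' ≤ toLex t := hlead
    -- squarefree reduction of f
    set f' : MvPolynomial (Fin n) (ZMod 2) :=
      ∑ m ∈ f.support, monomial (sq m) (coeff m f) with hf'
    have hsqt : sq t = t := sq_eq_self (hp t ht)
    -- coeff t f' = coeff t f
    have hcoefft : coeff t f' = coeff t f := by
      rw [hf']
      rw [show coeff t (∑ m ∈ f.support, monomial (sq m) (coeff m f))
          = ∑ m ∈ f.support, coeff t (monomial (sq m) (coeff m f)) from
        (map_sum (coeffAddMonoidHom t) _ _)]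
      rw [Finset.sum_eq_single_of_mem t htf]
      · rw [coeff_monomial, if_pos hsqt]
      · intro m hm hmt
        rw [coeff_monomial, if_neg]
        intro hsm
        apply hmt
        have h1 : toLex t ≤ toLex m := hsm ▸ toLex_sq_le m
        have h2 : toLex m ≤ toLex t := hlead' m hm
        exact toLex_inj.mp (le_antisymm h2 h1)
    -- every monomial of f' is a squarefree part of a monomial of f
    have hsupp' : ∀ m' ∈ f'.support, ∃ m ∈ f.support, m' = sq m := by
      intro m' hm'
      rw [mem_support_iff, hf'] at hm'
      rw [show coeff m' (∑ m ∈ f.support, monomial (sq m) (coeff m f))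
          = ∑ m ∈ f.support, coeff m' (monomial (sq m) (coeff m f)) from
        (map_sum (coeffAddMonoidHom m') _ _)] at hm'
      obtain ⟨m, hm, hne⟩ := Finset.exists_ne_zero_of_sum_ne_zero hm'
      rw [coeff_monomial] at hne
      exact ⟨m, hm, by by_contra h; exact hne (if_neg (fun hh => h hh.symm))⟩
    have hbool' : IsBooleanPoly f' := by
      intro m' hm' i
      obtain ⟨m, _, rfl⟩ := hsupp' m' hm'
      simp
    have hle' : ∀ m' ∈ f'.support, toLex m' ≤ toLex t := by
      intro m' hm'
      obtain ⟨m, hm, rfl⟩ := hsupp' m' hm'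
      exact le_trans (toLex_sq_le m) (hlead' m hm)
    -- f' ∈ I
    have hf'I : f' ∈ I := by
      have hdiff : f' - f ∈ fieldIdeal n := by
        have hrepr : f' - f = ∑ m ∈ f.support,
            ((monomial (sq m) (coeff m f)) - monomial m (coeff m f)) := by
          rw [Finset.sum_sub_distrib, ← hf', ← f.as_sum]
        rw [hrepr]
        exact Ideal.sum_mem _ (fun m _ => monomial_sq_sub_mem m (coeff m f))
      have := Ideal.add_mem I (hI hdiff) hfI
      rwa [sub_add_cancel] at this
    -- q := p + f'
    set q := p + f' with hq
    have hsuppq : q.support = symmDiff p.support f'.support := support_add_eq p f'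
    have hboolq : IsBooleanPoly q := by
      intro m hm i
      rw [hsuppq, Finset.mem_symmDiff] at hm
      rcases hm with ⟨h1, _⟩ | ⟨h1, _⟩
      · exact hp m h1 i
      · exact hbool' m h1 i
    have hqp : q - p ∈ I := by
      rw [hq, add_sub_cancel_left]; exact hf'I
    have htf' : t ∈ f'.support := by
      rw [mem_support_iff, hcoefft]
      exact mem_support_iff.mp htf
    have hsd : symmDiff p.support q.support = f'.support := by
      have : p + q = f' := by rw [hq, ← add_assoc, add_self_poly, zero_add]
      rw [← support_add_eq, this]
    have htq : t ∉ q.support := by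
      rw [hsuppq, Finset.mem_symmDiff]
      rintro (⟨_, h⟩ | ⟨_, h⟩) <;> [exact h htf'; exact h ht]
    rcases hmin q hboolq hqp with heq | ⟨m, hm, hmax⟩
    · apply mem_support_iff.mp htf'
      have : f' = q - p := by rw [hq, add_sub_cancel_left]
      rw [this, ← heq, sub_self, coeff_zero]
    · rw [Finset.mem_sdiff] at hm
      have hm' : m ∈ f'.support := by
        rw [← hsd, Finset.mem_symmDiff]; exact Or.inr hm
      have h1 : toLex m ≤ toLex t := hle' m hm'
      have h2 : toLex t ≤ toLex m := hmax t (by rw [hsd]; exact htf')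
      have : m = t := toLex_inj.mp (le_antisymm h1 h2)
      exact hm.2 (this ▸ ht)
  · -- standard → minimal
    intro hstd q hq hqI
    by_cases hpq : p = q
    · exact Or.inl hpq
    right
    set g := q - p with hg
    have hgI : g ∈ I := hqI
    have hgne : g ≠ 0 := sub_ne_zero.mpr (fun h => hpq h.symm)
    have hsuppg : g.support = symmDiff q.support p.support := by
      rw [hg, sub_eq_add_poly, support_add_eq]
    obtain ⟨t, htg, hmax⟩ :=
      Finset.exists_max_image g.support (fun m => toLex m) (support_nonempty.mpr hgne)
    have hlead : IsLeadingMonomial MonomialOrder.lex g t :=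
      ⟨htg, fun t' ht' => hmax t' ht'⟩
    have htp : t ∉ p.support := by
      intro htp
      exact hstd t htp ⟨g, hgI, hlead⟩
    have htq : t ∈ q.support := by
      have := htg
      rw [hsuppg, Finset.mem_symmDiff] at this
      rcases this with ⟨h1, _⟩ | ⟨h1, h2⟩
      · exact h1
      · exact absurd h1 htp
    exact ⟨t, Finset.mem_sdiff.mpr ⟨htq, htp⟩, fun m' hm' => by
      apply hmax
      rw [hsuppg, symmDiff_comm]; exact hm'⟩
end

section
/- Let P ⊆ (Fin n → ZMod 2) and let g ∈ R = MvPolynomial (Fin n) (ZMod 2) be a Boolean polynomial that is minimal with respect to the extended lex ordering among all Boolean polynomials in the coset g + I(P). Then the support of g has at most |P| elements. -/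
open MvPolynomial

/-- A Boolean polynomial that is extended-lex minimal in its coset modulo the vanishing
ideal of `P` has at most `|P|` terms. -/
theorem support_card_le_of_extLex_minimal (n : ℕ) (P : Set (Fin n → ZMod 2))
    (g : MvPolynomial (Fin n) (ZMod 2)) (hg : IsBooleanPoly g)
    (hmin : ∀ q : MvPolynomial (Fin n) (ZMod 2),
      IsBooleanPoly q → q - g ∈ pointsVanishingIdeal P → ExtLexLe g q) :
    g.support.card ≤ P.ncard := by
  classical
  by_contra hcard
  push_neg at hcard
  haveI : Fintype ↥P := Fintype.ofFinite ↥P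
  -- The evaluation map on the span of monomials of g
  set L : (↥g.support → ZMod 2) →ₗ[ZMod 2] (↥P → ZMod 2) :=
    { toFun := fun c p => ∑ m : ↥g.support,
        c m * eval (p : Fin n → ZMod 2) (monomial (m : Fin n →₀ ℕ) (1 : ZMod 2)),
      map_add' := by
        intro a b; funext p
        simp [add_mul, Finset.sum_add_distrib]
      map_smul' := by
        intro r a; funext p
        simp [Finset.mul_sum, mul_assoc] } with hLdef
  have hnotinj : ¬ Function.Injective L := by
    intro hinj
    have hle := LinearMap.finrank_le_finrank_of_injective hinj
    rw [Module.finrank_pi, Module.finrank_pi] at hle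
    simp only [Fintype.card_coe] at hle
    have hPcard : Fintype.card ↥P = P.ncard := by
      rw [← Nat.card_eq_fintype_card, Nat.card_coe_set_eq]
    omega
  obtain ⟨c, hc0, hcne⟩ : ∃ c, L c = 0 ∧ c ≠ 0 := by
    rw [← LinearMap.ker_eq_bot] at hnotinj
    obtain ⟨c, hc, hcne⟩ := Submodule.exists_mem_ne_zero_of_ne_bot hnotinj
    exact ⟨c, LinearMap.mem_ker.mp hc, hcne⟩
  set h : MvPolynomial (Fin n) (ZMod 2) :=
    ∑ m ∈ g.support.attach, monomial (m : Fin n →₀ ℕ) (c m) with hhdef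
  have hcoeff : ∀ t (ht : t ∈ g.support), coeff t h = c ⟨t, ht⟩ := by
    intro t ht
    rw [hhdef, coeff_sum]
    rw [Finset.sum_eq_single (⟨t, ht⟩ : ↥g.support)]
    · simp [coeff_monomial]
    · intro b _ hb
      rw [coeff_monomial, if_neg]
      intro hbt
      exact hb (Subtype.ext hbt)
    · intro habs
      exact absurd (Finset.mem_attach _ _) habs
  have hcoeff0 : ∀ t, t ∉ g.support → coeff t h = 0 := by
    intro t ht
    rw [hhdef, coeff_sum]
    refine Finset.sum_eq_zero fun m _ => ?_
    rw [coeff_monomial, if_neg]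
    intro hmt
    exact ht (hmt ▸ m.2)
  have hsupp : h.support ⊆ g.support := by
    intro t ht
    by_contra htg
    exact (mem_support_iff.mp ht) (hcoeff0 t htg)
  have hne : h ≠ 0 := by
    obtain ⟨m, hm⟩ := Function.ne_iff.mp hcne
    intro h0
    apply hm
    have := hcoeff (m : Fin n →₀ ℕ) m.2
    rw [h0] at this
    simpa using this.symm
  have hvanish : h ∈ pointsVanishingIdeal P := by
    intro p hp
    have hLc := congrFun (congrArg (fun f => (f : ↥P → ZMod 2)) hc0) ⟨p, hp⟩
    simp only [hLdef, LinearMap.coe_mk, AddHom.coe_mk, Pi.zero_apply] at hLc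
    rw [hhdef]
    rw [map_sum]
    calc ∑ m ∈ g.support.attach, eval p (monomial (m : Fin n →₀ ℕ) (c m))
        = ∑ m ∈ g.support.attach,
            c m * eval p (monomial (m : Fin n →₀ ℕ) (1 : ZMod 2)) := by
          refine Finset.sum_congr rfl fun m _ => ?_
          simp [eval_monomial]
      _ = 0 := by rw [← Finset.univ_eq_attach]; exact hLc
  -- the smaller polynomial
  have hqsupp : (g + h).support ⊆ g.support := by
    refine (MvPolynomial.support_add).trans ?_
    exact Finset.union_subset (Finset.Subset.refl _) hsupp
  have hqbool : IsBooleanPoly (g + h) := fun m hm i => hg m (hqsupp hm) i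
  have hmem : (g + h) - g ∈ pointsVanishingIdeal P := by
    have : (g + h) - g = h := by ring
    rw [this]; exact hvanish
  rcases hmin (g + h) hqbool hmem with heq | hlt
  · exact hne (by linear_combination -heq)
  · obtain ⟨m, hm, -⟩ := hlt
    rw [Finset.mem_sdiff] at hm
    exact hm.2 (hqsupp hm.1)
end

section
/- For any two disjoint subsets Z, O of Fin n → ZMod 2 there exists a unique Boolean polynomial p ∈ MvPolynomial (Fin n) (ZMod 2) such that p(z) = 0 for all z ∈ Z, p(o) = 1 for all o ∈ O, and every Boolean polynomial q with q(z) = 0 for all z ∈ Z and q(o) = 1 for all o ∈ O satisfies p ≤ q in the extended lex ordering. -/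
open MvPolynomial

/-!
A polynomial over `𝔽₂` is determined by its support, so the extended lex order is the colex order
on supports, read in the lex order on monomials: a linear order. Evaluation is a bijection from
Boolean polynomials onto all functions `𝔽₂ⁿ → 𝔽₂`, so the Boolean interpolants of a partial
function (disjoint `Z`, `O`) form a finite nonempty set, which has a unique least element.
-/

namespace Finset

variable {α : Type*} [LinearOrder α] {s t : Finset α}

theorem toColex_lt_toColex_iff_exists_forall_symmDiff_le :
    toColex s < toColex t ↔ ∃ a ∈ t \ s, ∀ b ∈ symmDiff s t, b ≤ a := by
  constructor
  · intro h
    obtain ⟨hst, hmax⟩ := Colex.toColex_lt_toColex_iff_max'_mem.1 h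
    have hM := max'_mem _ (symmDiff_nonempty.2 hst)
    refine ⟨_, mem_sdiff.2 ⟨hmax, fun hs => ?_⟩, fun b hb => le_max' _ b hb⟩
    simp [mem_symmDiff, hmax, hs] at hM
  · rintro ⟨a, ha, hle⟩
    rw [mem_sdiff] at ha
    refine Colex.toColex_lt_toColex_iff_exists_forall_lt.2 ⟨a, ha.1, ha.2, fun b hbs hbt => ?_⟩
    exact (hle b (mem_symmDiff.2 (Or.inl ⟨hbs, hbt⟩))).lt_of_ne (ne_of_mem_of_not_mem hbs ha.2)

end Finset

namespace MvPolynomial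

theorem eq_of_support_eq_of_zmod_two {σ : Type*} {p q : MvPolynomial σ (ZMod 2)}
    (h : p.support = q.support) : p = q := by
  ext m
  have hZMod2 : ∀ a b : ZMod 2, (a ≠ 0 ↔ b ≠ 0) → a = b := by decide
  exact hZMod2 _ _ (by simp only [← mem_support_iff, h])

end MvPolynomial

variable {n : ℕ}

noncomputable def extLexKey (p : MvPolynomial (Fin n) (ZMod 2)) :
    Colex (Finset (Lex (Fin n →₀ ℕ))) :=
  toColex (p.support.map toLex.toEmbedding)

theorem extLexKey_injective : Function.Injective (@extLexKey n) := fun _ _ h =>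
  MvPolynomial.eq_of_support_eq_of_zmod_two (Finset.map_injective _ (toColex_inj.1 h))

theorem extLexLt_iff_extLexKey_lt {p q : MvPolynomial (Fin n) (ZMod 2)} :
    ExtLexLt p q ↔ extLexKey p < extLexKey q := by
  rw [extLexKey, extLexKey, Finset.toColex_lt_toColex_iff_exists_forall_symmDiff_le]
  simp [ExtLexLt, Finset.mem_symmDiff]

theorem extLexLe_iff_extLexKey_le {p q : MvPolynomial (Fin n) (ZMod 2)} :
    ExtLexLe p q ↔ extLexKey p ≤ extLexKey q := by
  rw [ExtLexLe, le_iff_eq_or_lt, extLexKey_injective.eq_iff, extLexLt_iff_extLexKey_lt]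

theorem isBooleanPoly_iff_mem_restrictDegree {p : MvPolynomial (Fin n) (ZMod 2)} :
    IsBooleanPoly p ↔ p ∈ restrictDegree (Fin n) (ZMod 2) (Fintype.card (ZMod 2) - 1) := by
  rw [mem_restrictDegree, ZMod.card]
  rfl

theorem exists_isBooleanPoly_eval_eq (f : (Fin n → ZMod 2) → ZMod 2) :
    ∃ p, IsBooleanPoly p ∧ ∀ x, eval x p = f x := by
  obtain ⟨p, hp, hpf⟩ := Submodule.mem_map.1 ((map_restrict_dom_evalₗ (ZMod 2) (Fin n)).ge
    (Submodule.mem_top (x := f)))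
  exact ⟨p, isBooleanPoly_iff_mem_restrictDegree.2 hp, congrFun hpf⟩

theorem IsBooleanPoly.eq_of_eval_eq {p q : MvPolynomial (Fin n) (ZMod 2)} (hp : IsBooleanPoly p)
    (hq : IsBooleanPoly q) (h : ∀ x, eval x p = eval x q) : p = q := by
  refine sub_eq_zero.1 (eq_zero_of_eval_eq_zero _ _ _ (fun x => ?_) (Submodule.sub_mem _
    (isBooleanPoly_iff_mem_restrictDegree.1 hp) (isBooleanPoly_iff_mem_restrictDegree.1 hq)))
  rw [map_sub, h, sub_self]

theorem finite_setOf_isBooleanPoly :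
    {p : MvPolynomial (Fin n) (ZMod 2) | IsBooleanPoly p}.Finite :=
  Set.Finite.of_finite_image (f := fun p x => eval x p) (Set.toFinite _)
    fun _ hp _ hq h => hp.eq_of_eval_eq hq (congrFun h)

/-- There is a unique extended-lex-minimal Boolean polynomial interpolating a
partial Boolean function given by disjoint sets `Z` and `O`. -/
theorem existsUnique_extLex_min_interpolation (n : ℕ) (Z O : Set (Fin n → ZMod 2))
    (hZO : Disjoint Z O) :
    ∃! p : MvPolynomial (Fin n) (ZMod 2),
      IsBooleanPoly p ∧ (∀ z ∈ Z, eval z p = 0) ∧ (∀ o ∈ O, eval o p = 1) ∧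
        ∀ q : MvPolynomial (Fin n) (ZMod 2), IsBooleanPoly q →
          (∀ z ∈ Z, eval z q = 0) → (∀ o ∈ O, eval o q = 1) → ExtLexLe p q := by
  classical
  set S := {p | IsBooleanPoly p ∧ (∀ z ∈ Z, eval z p = 0) ∧ ∀ o ∈ O, eval o p = 1}
  have hS : S.Nonempty := by
    obtain ⟨p, hp, hpO⟩ := exists_isBooleanPoly_eval_eq fun x => if x ∈ O then 1 else 0
    refine ⟨p, hp, fun z hz => ?_, fun o ho => ?_⟩
    · rw [hpO, if_neg (hZO.notMem_of_mem_left hz)]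
    · rw [hpO, if_pos ho]
  obtain ⟨p, ⟨hp, hpZ, hpO⟩, hpmin⟩ := Set.exists_min_image S extLexKey
    (finite_setOf_isBooleanPoly.subset fun _ hq => hq.1) hS
  refine ⟨p, ⟨hp, hpZ, hpO, fun q hq hqZ hqO => ?_⟩, ?_⟩
  · exact extLexLe_iff_extLexKey_le.2 (hpmin q ⟨hq, hqZ, hqO⟩)
  · rintro q ⟨hq, hqZ, hqO, hqmin⟩
    have hqp := extLexLe_iff_extLexKey_le.1 (hqmin p hp hpZ hpO)
    exact extLexKey_injective (hqp.antisymm (hpmin q ⟨hq, hqZ, hqO⟩))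
end

section
/- Let S be a nonempty set of nonconstant Boolean polynomials in R = MvPolynomial (Fin n) (ZMod 2), and let x_v be the lex-largest variable occurring in some element of S. Write each g ∈ S uniquely as g = x_v·g₁ + g₀ where x_v occurs in neither g₁ nor g₀. Then p = x_v·p₁ + p₀ ∈ S is minimal in S with respect to the extended lex ordering if and only if p₁ is minimal in {g₁ : g ∈ S} and p₀ is minimal in {g₀ : g ∈ S and g₁ = p₁}, both with respect to the extended lex ordering. -/
open MvPolynomial

section Aux
variable {n : ℕ} {v : Fin n}

theorem lex_lt_iff' {a b : Fin n →₀ ℕ} :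
    toLex a < toLex b ↔ ∃ j, (∀ d, d < j → a d = b d) ∧ a j < b j := Finsupp.lex_def

theorem lex_lt_add_right {a b c : Fin n →₀ ℕ} :
    toLex (a + c) < toLex (b + c) ↔ toLex a < toLex b := by
  rw [lex_lt_iff', lex_lt_iff']
  constructor
  · rintro ⟨j, h1, h2⟩
    exact ⟨j, fun d hd => by have := h1 d hd; simpa using this, by simpa using h2⟩
  · rintro ⟨j, h1, h2⟩
    exact ⟨j, fun d hd => by simp [h1 d hd], by simpa using h2⟩

theorem lex_le_add_right {a b c : Fin n →₀ ℕ} :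
    toLex (a + c) ≤ toLex (b + c) ↔ toLex a ≤ toLex b := by
  rw [← not_lt, ← not_lt, lex_lt_add_right]

theorem lex_lt_single {a b : Fin n →₀ ℕ}
    (ha : ∀ j, j ≤ v → a j = 0) (hb : ∀ j, j < v → b j = 0) :
    toLex a < toLex (b + Finsupp.single v 1) := by
  rw [lex_lt_iff']
  refine ⟨v, fun d hd => ?_, ?_⟩
  · rw [Finsupp.add_apply, Finsupp.single_apply, if_neg hd.ne', ha d hd.le, hb d hd, add_zero]
  · have h1 : ((b + Finsupp.single v 1 : Fin n →₀ ℕ)) v = b v + 1 := by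
      rw [Finsupp.add_apply, Finsupp.single_apply, if_pos rfl]
    rw [h1, ha v le_rfl]
    omega

theorem vfree_iff {q : MvPolynomial (Fin n) (ZMod 2)} :
    v ∉ q.vars ↔ ∀ m ∈ q.support, m v = 0 := by
  simp [MvPolynomial.mem_vars, Finsupp.mem_support_iff]

theorem coeff_X_mul_vzero (q : MvPolynomial (Fin n) (ZMod 2))
    {m : Fin n →₀ ℕ} (hm : m v = 0) : coeff m (X v * q) = 0 := by
  rw [coeff_X_mul', if_neg]
  simp [Finsupp.mem_support_iff, hm]

theorem coeff_X_mul_shift (q : MvPolynomial (Fin n) (ZMod 2))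
    (m : Fin n →₀ ℕ) : coeff (m + Finsupp.single v 1) (X v * q) = coeff m q := by
  rw [add_comm]; exact coeff_X_mul m v q

theorem coeff_vzero_of_ne {q : MvPolynomial (Fin n) (ZMod 2)}
    (hq : ∀ m ∈ q.support, m v = 0) {m : Fin n →₀ ℕ} (hm : m v ≠ 0) : coeff m q = 0 := by
  by_contra h
  exact hm (hq m (MvPolynomial.mem_support_iff.2 h))

theorem eq_of_support_eq {q r : MvPolynomial (Fin n) (ZMod 2)}
    (h : q.support = r.support) : q = r := by
  apply MvPolynomial.ext; intro m
  have hz : ∀ x : ZMod 2, x = 0 ∨ x = 1 := by decide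
  by_cases hm : m ∈ q.support
  · have h1 := MvPolynomial.mem_support_iff.1 hm
    have h2 := MvPolynomial.mem_support_iff.1 (h ▸ hm)
    rcases hz (coeff m q) with e | e <;> rcases hz (coeff m r) with e2 | e2 <;> simp_all
  · have h1 := MvPolynomial.notMem_support_iff.1 hm
    have h2 := MvPolynomial.notMem_support_iff.1 (by rwa [h] at hm)
    rw [h1, h2]

theorem shift_vne {m : Fin n →₀ ℕ} (hm : m v = 0) :
    ((m + Finsupp.single v 1 : Fin n →₀ ℕ)) v ≠ 0 := by
  rw [Finsupp.add_apply, Finsupp.single_apply, if_pos rfl, hm]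
  omega

theorem mem_support0 {q₁ q₀ : MvPolynomial (Fin n) (ZMod 2)}
    {m : Fin n →₀ ℕ} (hm : m v = 0) :
    m ∈ (X v * q₁ + q₀).support ↔ m ∈ q₀.support := by
  rw [MvPolynomial.mem_support_iff, MvPolynomial.mem_support_iff, coeff_add,
    coeff_X_mul_vzero q₁ hm, zero_add]

theorem mem_support1 {q₁ q₀ : MvPolynomial (Fin n) (ZMod 2)}
    (hq₀ : ∀ m ∈ q₀.support, m v = 0) {m : Fin n →₀ ℕ} (hm : m v = 0) :
    m + Finsupp.single v 1 ∈ (X v * q₁ + q₀).support ↔ m ∈ q₁.support := by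
  rw [MvPolynomial.mem_support_iff, MvPolynomial.mem_support_iff, coeff_add,
    coeff_X_mul_shift, coeff_vzero_of_ne hq₀ (shift_vne hm), add_zero]

theorem mem_support_vpos {q₁ q₀ : MvPolynomial (Fin n) (ZMod 2)}
    (hq₁ : ∀ m ∈ q₁.support, m v = 0) (hq₀ : ∀ m ∈ q₀.support, m v = 0)
    {m : Fin n →₀ ℕ} (hm : m v ≠ 0) (h : m ∈ (X v * q₁ + q₀).support) :
    ∃ a ∈ q₁.support, a v = 0 ∧ m = a + Finsupp.single v 1 := by
  have h0 : coeff m q₀ = 0 := coeff_vzero_of_ne hq₀ hm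
  have hne : coeff (m - Finsupp.single v 1) q₁ ≠ 0 := by
    have h2 := MvPolynomial.mem_support_iff.1 h
    rw [coeff_add, h0, add_zero, coeff_X_mul', if_pos (Finsupp.mem_support_iff.2 hm)] at h2
    exact h2
  have hmem := MvPolynomial.mem_support_iff.2 hne
  refine ⟨_, hmem, hq₁ _ hmem, ?_⟩
  exact (tsub_add_cancel_of_le (Finsupp.single_le_iff.2 (Nat.one_le_iff_ne_zero.2 hm))).symm

theorem decomp_unique {q₁ q₀ r₁ r₀ : MvPolynomial (Fin n) (ZMod 2)}
    (hq₁ : ∀ m ∈ q₁.support, m v = 0) (hq₀ : ∀ m ∈ q₀.support, m v = 0)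
    (hr₁ : ∀ m ∈ r₁.support, m v = 0) (hr₀ : ∀ m ∈ r₀.support, m v = 0)
    (h : X v * q₁ + q₀ = X v * r₁ + r₀) : q₁ = r₁ ∧ q₀ = r₀ := by
  have key : ∀ m, coeff m (X v * q₁ + q₀) = coeff m (X v * r₁ + r₀) := fun m => by rw [h]
  constructor
  · apply MvPolynomial.ext; intro m
    rcases eq_or_ne (m v) 0 with hm | hm
    · have := key (m + Finsupp.single v 1)
      rwa [coeff_add, coeff_add, coeff_X_mul_shift, coeff_X_mul_shift,
        coeff_vzero_of_ne hq₀ (shift_vne hm), coeff_vzero_of_ne hr₀ (shift_vne hm),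
        add_zero, add_zero] at this
    · rw [coeff_vzero_of_ne hq₁ hm, coeff_vzero_of_ne hr₁ hm]
  · apply MvPolynomial.ext; intro m
    rcases eq_or_ne (m v) 0 with hm | hm
    · have := key m
      rwa [coeff_add, coeff_add, coeff_X_mul_vzero q₁ hm, coeff_X_mul_vzero r₁ hm,
        zero_add, zero_add] at this
    · rw [coeff_vzero_of_ne hq₀ hm, coeff_vzero_of_ne hr₀ hm]

end Aux

section Aux2
variable {n : ℕ} {v : Fin n}

theorem extLexLt_irrefl (q : MvPolynomial (Fin n) (ZMod 2)) : ¬ ExtLexLt q q := by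
  rintro ⟨m, hm, -⟩
  simp at hm

theorem extLexLt_decomp {q₁ q₀ r₁ r₀ : MvPolynomial (Fin n) (ZMod 2)}
    (hq₁ : ∀ m ∈ q₁.support, ∀ j, j ≤ v → m j = 0)
    (hq₀ : ∀ m ∈ q₀.support, ∀ j, j ≤ v → m j = 0)
    (hr₁ : ∀ m ∈ r₁.support, ∀ j, j ≤ v → m j = 0)
    (hr₀ : ∀ m ∈ r₀.support, ∀ j, j ≤ v → m j = 0) :
    ExtLexLt (X v * q₁ + q₀) (X v * r₁ + r₀) ↔
      ExtLexLt q₁ r₁ ∨ (q₁ = r₁ ∧ ExtLexLt q₀ r₀) := by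
  have hq₁' : ∀ m ∈ q₁.support, m v = 0 := fun m hm => hq₁ m hm v le_rfl
  have hq₀' : ∀ m ∈ q₀.support, m v = 0 := fun m hm => hq₀ m hm v le_rfl
  have hr₁' : ∀ m ∈ r₁.support, m v = 0 := fun m hm => hr₁ m hm v le_rfl
  have hr₀' : ∀ m ∈ r₀.support, m v = 0 := fun m hm => hr₀ m hm v le_rfl
  set P := X v * q₁ + q₀ with hP
  set Q := X v * r₁ + r₀ with hQ
  have symm0 : ∀ m : Fin n →₀ ℕ, m v = 0 →
      (m ∈ symmDiff P.support Q.support ↔ m ∈ symmDiff q₀.support r₀.support) := by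
    intro m hm
    rw [Finset.mem_symmDiff, Finset.mem_symmDiff, hP, hQ, mem_support0 hm, mem_support0 hm]
  have symm1 : ∀ m : Fin n →₀ ℕ, m v = 0 →
      (m + Finsupp.single v 1 ∈ symmDiff P.support Q.support ↔
        m ∈ symmDiff q₁.support r₁.support) := by
    intro m hm
    rw [Finset.mem_symmDiff, Finset.mem_symmDiff, hP, hQ,
      mem_support1 hq₀' hm, mem_support1 hr₀' hm]
  have symmAll : ∀ m' ∈ symmDiff P.support Q.support,
      (m' v = 0 ∧ m' ∈ symmDiff q₀.support r₀.support) ∨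
      ∃ b ∈ symmDiff q₁.support r₁.support, b v = 0 ∧ m' = b + Finsupp.single v 1 := by
    intro m' hm'
    rcases eq_or_ne (m' v) 0 with h0 | h0
    · exact Or.inl ⟨h0, (symm0 m' h0).1 hm'⟩
    · right
      have hmem : m' ∈ P.support ∨ m' ∈ Q.support := by
        rcases Finset.mem_symmDiff.1 hm' with h | h
        · exact Or.inl h.1
        · exact Or.inr h.1
      have : ∃ a, a v = 0 ∧ m' = a + Finsupp.single v 1 := by
        rcases hmem with h | h
        · obtain ⟨a, _, hav, hae⟩ := mem_support_vpos hq₁' hq₀' h0 h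
          exact ⟨a, hav, hae⟩
        · obtain ⟨a, _, hav, hae⟩ := mem_support_vpos hr₁' hr₀' h0 h
          exact ⟨a, hav, hae⟩
      obtain ⟨a, hav, hae⟩ := this
      refine ⟨a, ?_, hav, hae⟩
      exact (symm1 a hav).1 (hae ▸ hm')
  constructor
  · rintro ⟨m, hm, hmax⟩
    rw [Finset.mem_sdiff] at hm
    rcases eq_or_ne (m v) 0 with h0 | h0
    · have hmr₀ : m ∈ r₀.support := (mem_support0 h0).1 hm.1
      have heq : q₁ = r₁ := by
        by_contra hne
        have hsd : (symmDiff q₁.support r₁.support).Nonempty := by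
          rw [Finset.nonempty_iff_ne_empty]
          intro hemp
          exact hne (eq_of_support_eq (Finset.symmDiff_eq_empty.1 hemp))
        obtain ⟨a, ha⟩ := hsd
        have hav : a v = 0 := by
          rcases Finset.mem_symmDiff.1 ha with h | h
          · exact hq₁' a h.1
          · exact hr₁' a h.1
        have halow : ∀ j, j < v → a j = 0 := by
          rcases Finset.mem_symmDiff.1 ha with h | h
          · exact fun j hj => hq₁ a h.1 j hj.le
          · exact fun j hj => hr₁ a h.1 j hj.le
        have hle := hmax _ ((symm1 a hav).2 ha)
        have hlt := lex_lt_single (fun j hj => hr₀ m hmr₀ j hj) halow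
        exact absurd hle (not_le.2 hlt)
      refine Or.inr ⟨heq, m, Finset.mem_sdiff.2 ⟨hmr₀, fun h => hm.2 ((mem_support0 h0).2 h)⟩, ?_⟩
      intro m' hm'
      have hm'v : m' v = 0 := by
        rcases Finset.mem_symmDiff.1 hm' with h | h
        · exact hq₀' m' h.1
        · exact hr₀' m' h.1
      exact hmax _ ((symm0 m' hm'v).2 hm')
    · obtain ⟨a, haR, hav, hae⟩ := mem_support_vpos hr₁' hr₀' h0 hm.1
      have haP : a ∉ q₁.support := fun h => hm.2 (hae ▸ (mem_support1 hq₀' hav).2 h)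
      refine Or.inl ⟨a, Finset.mem_sdiff.2 ⟨haR, haP⟩, ?_⟩
      intro m' hm'
      have hm'v : m' v = 0 := by
        rcases Finset.mem_symmDiff.1 hm' with h | h
        · exact hq₁' m' h.1
        · exact hr₁' m' h.1
      have := hmax _ ((symm1 m' hm'v).2 hm')
      rw [hae] at this
      exact lex_le_add_right.1 this
  · rintro (⟨a, ha, hmax⟩ | ⟨heq, m, hm, hmax⟩)
    · rw [Finset.mem_sdiff] at ha
      have hav : a v = 0 := hr₁' a ha.1
      refine ⟨a + Finsupp.single v 1, Finset.mem_sdiff.2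
        ⟨(mem_support1 hr₀' hav).2 ha.1, fun h => ha.2 ((mem_support1 hq₀' hav).1 h)⟩, ?_⟩
      intro m' hm'
      rcases symmAll m' hm' with ⟨h0, hmem⟩ | ⟨b, hb, hbv, hbe⟩
      · have hlow : ∀ j, j ≤ v → m' j = 0 := by
          rcases Finset.mem_symmDiff.1 hmem with h | h
          · exact hq₀ m' h.1
          · exact hr₀ m' h.1
        exact (lex_lt_single hlow (fun j hj => hr₁ a ha.1 j hj.le)).le
      · rw [hbe, lex_le_add_right]
        exact hmax b hb
    · subst heq
      rw [Finset.mem_sdiff] at hm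
      have hmv : m v = 0 := hr₀' m hm.1
      refine ⟨m, Finset.mem_sdiff.2
        ⟨(mem_support0 hmv).2 hm.1, fun h => hm.2 ((mem_support0 hmv).1 h)⟩, ?_⟩
      intro m' hm'
      rcases symmAll m' hm' with ⟨h0, hmem⟩ | ⟨b, hb, hbv, hbe⟩
      · exact hmax m' hmem
      · exfalso
        rw [symmDiff_self] at hb
        simp at hb

end Aux2

section Aux3
variable {n : ℕ} {v : Fin n}

theorem exists_decomp (g : MvPolynomial (Fin n) (ZMod 2)) (hb : IsBooleanPoly g) :
    ∃ g₁ g₀ : MvPolynomial (Fin n) (ZMod 2),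
      (∀ m ∈ g₁.support, m v = 0) ∧ (∀ m ∈ g₀.support, m v = 0) ∧ g = X v * g₁ + g₀ := by
  classical
  refine ⟨∑ m ∈ g.support.filter (fun m => ¬ m v = 0),
      monomial (m - Finsupp.single v 1) (coeff m g),
    ∑ m ∈ g.support.filter (fun m => m v = 0), monomial m (coeff m g), ?_, ?_, ?_⟩
  · intro a ha
    by_contra hav
    refine MvPolynomial.mem_support_iff.1 ha ?_
    rw [coeff_sum]
    apply Finset.sum_eq_zero
    intro m hm
    rw [coeff_monomial, if_neg]
    intro hma
    apply hav
    rw [← hma]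
    have hfm := Finset.mem_filter.1 hm
    have h1 : m v = 1 := le_antisymm (hb m hfm.1 v) (Nat.one_le_iff_ne_zero.2 hfm.2)
    rw [Finsupp.tsub_apply, Finsupp.single_apply, if_pos rfl, h1]
  · intro a ha
    by_contra hav
    refine MvPolynomial.mem_support_iff.1 ha ?_
    rw [coeff_sum]
    apply Finset.sum_eq_zero
    intro m hm
    rw [coeff_monomial, if_neg]
    intro hma
    exact hav (hma ▸ (Finset.mem_filter.1 hm).2)
  · have key : ∀ m ∈ g.support.filter (fun m => ¬ m v = 0),
        X v * monomial (m - Finsupp.single v 1) (coeff m g) = monomial m (coeff m g) := by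
      intro m hm
      have h1 : Finsupp.single v 1 ≤ m :=
        Finsupp.single_le_iff.2 (Nat.one_le_iff_ne_zero.2 (Finset.mem_filter.1 hm).2)
      rw [X, monomial_mul, one_mul, add_tsub_cancel_of_le h1]
    symm
    rw [Finset.mul_sum, Finset.sum_congr rfl key, add_comm,
      Finset.sum_filter_add_sum_filter_not g.support (fun m => m v = 0),
      support_sum_monomial_coeff]

theorem low_of_decomp {g g₁ g₀ : MvPolynomial (Fin n) (ZMod 2)}
    (hg : ∀ i ∈ g.vars, v ≤ i)
    (h1 : ∀ m ∈ g₁.support, m v = 0) (h0 : ∀ m ∈ g₀.support, m v = 0)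
    (hdec : g = X v * g₁ + g₀) :
    (∀ m ∈ g₁.support, ∀ j, j ≤ v → m j = 0) ∧
      (∀ m ∈ g₀.support, ∀ j, j ≤ v → m j = 0) := by
  have hvars : ∀ m ∈ g.support, ∀ j, j < v → m j = 0 := by
    intro m hm j hj
    by_contra hne
    have : j ∈ g.vars := (MvPolynomial.mem_vars j).2 ⟨m, hm, Finsupp.mem_support_iff.2 hne⟩
    exact absurd (hg j this) (not_le.2 hj)
  constructor
  · intro m hm j hj
    rcases eq_or_lt_of_le hj with rfl | hj'
    · exact h1 m hm
    · have hmem : m + Finsupp.single v 1 ∈ g.support := by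
        rw [hdec]; exact (mem_support1 h0 (h1 m hm)).2 hm
      have hz := hvars _ hmem j hj'
      rwa [Finsupp.add_apply, Finsupp.single_apply, if_neg hj'.ne', add_zero] at hz
  · intro m hm j hj
    rcases eq_or_lt_of_le hj with rfl | hj'
    · exact h0 m hm
    · have hmem : m ∈ g.support := by
        rw [hdec]; exact (mem_support0 (h0 m hm)).2 hm
      exact hvars _ hmem j hj'

end Aux3

/-- Characterization of the extended-lex minimal element of a set of nonconstant Boolean
polynomials via the decomposition `g = x_v * g₁ + g₀` at the lex-largest occurring
variable `x_v`. -/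
theorem extLex_minimal_iff_cofactors (n : ℕ)
    (S : Set (MvPolynomial (Fin n) (ZMod 2))) (hS : S.Nonempty)
    (hbool : ∀ g ∈ S, IsBooleanPoly g)
    (hnc : ∀ g ∈ S, ¬∃ c : ZMod 2, g = C c)
    (v : Fin n) (hv_occ : ∃ g ∈ S, v ∈ g.vars)
    (hv_max : ∀ g ∈ S, ∀ i ∈ g.vars, v ≤ i)
    (p p₁ p₀ : MvPolynomial (Fin n) (ZMod 2)) (hp : p ∈ S)
    (hp₁ : v ∉ p₁.vars) (hp₀ : v ∉ p₀.vars) (hdec : p = X v * p₁ + p₀) :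
    (∀ g ∈ S, ExtLexLe p g) ↔
      ((∀ g ∈ S, ∀ g₁ g₀ : MvPolynomial (Fin n) (ZMod 2),
          v ∉ g₁.vars → v ∉ g₀.vars → g = X v * g₁ + g₀ → ExtLexLe p₁ g₁) ∧
       (∀ g ∈ S, ∀ g₀ : MvPolynomial (Fin n) (ZMod 2),
          v ∉ g₀.vars → g = X v * p₁ + g₀ → ExtLexLe p₀ g₀)) := by
  have hp₁' : ∀ m ∈ p₁.support, m v = 0 := vfree_iff.1 hp₁
  have hp₀' : ∀ m ∈ p₀.support, m v = 0 := vfree_iff.1 hp₀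
  obtain ⟨hLp₁, hLp₀⟩ := low_of_decomp (hv_max p hp) hp₁' hp₀' hdec
  constructor
  · intro h
    constructor
    · intro g hg g₁ g₀ h1 h0 hgdec
      have h1' := vfree_iff.1 h1
      have h0' := vfree_iff.1 h0
      obtain ⟨hLg₁, hLg₀⟩ := low_of_decomp (hv_max g hg) h1' h0' hgdec
      rcases h g hg with heq | hlt
      · exact Or.inl (decomp_unique hp₁' hp₀' h1' h0' (by rw [← hdec, heq, hgdec])).1
      · rw [hdec, hgdec] at hlt
        rcases (extLexLt_decomp hLp₁ hLp₀ hLg₁ hLg₀).1 hlt with h' | ⟨h', -⟩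
        · exact Or.inr h'
        · exact Or.inl h'
    · intro g hg g₀ h0 hgdec
      have h0' := vfree_iff.1 h0
      obtain ⟨hLg₁, hLg₀⟩ := low_of_decomp (hv_max g hg) hp₁' h0' hgdec
      rcases h g hg with heq | hlt
      · exact Or.inl (decomp_unique hp₁' hp₀' hp₁' h0' (by rw [← hdec, heq, hgdec])).2
      · rw [hdec, hgdec] at hlt
        rcases (extLexLt_decomp hLp₁ hLp₀ hLg₁ hLg₀).1 hlt with h' | ⟨-, h'⟩
        · exact absurd h' (extLexLt_irrefl p₁)
        · exact Or.inr h'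
  · rintro ⟨h1, h2⟩ g hg
    obtain ⟨g₁, g₀, hg₁', hg₀', hgdec⟩ := exists_decomp g (hbool g hg)
    obtain ⟨hLg₁, hLg₀⟩ := low_of_decomp (hv_max g hg) hg₁' hg₀' hgdec
    rcases h1 g hg g₁ g₀ (vfree_iff.2 hg₁') (vfree_iff.2 hg₀') hgdec with heq1 | hlt1
    · subst heq1
      rcases h2 g hg g₀ (vfree_iff.2 hg₀') hgdec with heq0 | hlt0
      · exact Or.inl (by rw [hdec, hgdec, heq0])
      · right; rw [hdec, hgdec]
        exact (extLexLt_decomp hLp₁ hLp₀ hLg₁ hLg₀).2 (Or.inr ⟨rfl, hlt0⟩)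
    · right; rw [hdec, hgdec]
      exact (extLexLt_decomp hLp₁ hLp₀ hLg₁ hLg₀).2 (Or.inl hlt1)
end

section
/- Let I be an ideal of R = MvPolynomial (Fin n) (ZMod 2) containing the field ideal ⟨x_i^2 + x_i : i⟩, and let V(I) = {v ∈ (Fin n → ZMod 2) : f(v) = 0 for all f ∈ I}. Then I = {f ∈ R : f(v) = 0 for all v ∈ V(I)}; consequently, ideals of R containing the field ideal are in one-to-one correspondence with subsets of Fin n → ZMod 2. -/
open MvPolynomial

/-!
Over a finite field `K` with `q` elements the relations `X i ^ q = X i` reduce every polynomial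
to one of degree `< q` in each variable, and such a polynomial vanishing on all of `σ → K` is
zero. So the ideal of these field equations consists of the polynomials vanishing everywhere,
and an ideal `I` containing it is determined by the values of its elements: a polynomial `f`
vanishing on the zero locus of `I` agrees pointwise with `∑ v, C (f v) * indicator v`, and
`indicator v` lies in `I` as soon as `v` is not a common zero, because it agrees pointwise with
`C (g v)⁻¹ * indicator v * g` for any `g ∈ I` with `g v ≠ 0`.
-/

theorem pow_eq_pow_mod_sub_one_add_one {M : Type*} [Monoid M] {x : M} {q : ℕ} (hx : x ^ q = x)
    {k : ℕ} (hk : k ≠ 0) : x ^ k = x ^ ((k - 1) % (q - 1) + 1) := by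
  have period : ∀ r d, x ^ (r + 1 + (q - 1) * d) = x ^ (r + 1) := by
    intro r d
    induction d with
    | zero => simp
    | succ d ih =>
      rcases Nat.eq_zero_or_pos q with rfl | hq
      · simp
      · calc x ^ (r + 1 + (q - 1) * (d + 1)) = x ^ (r + (q - 1) * d) * x ^ q := by
              rw [← pow_add]; congr 1; rw [Nat.mul_succ]; omega
          _ = x ^ (r + 1) := by rw [hx, ← pow_succ, ← ih]; congr 1; ring
  have := period ((k - 1) % (q - 1)) ((k - 1) / (q - 1))
  rwa [add_right_comm, Nat.mod_add_div, Nat.sub_add_cancel (Nat.pos_of_ne_zero hk)] at this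

namespace MvPolynomial

universe u

variable {σ : Type u}

theorem exists_mem_restrictDegree_sub_mem_span {R : Type*} [CommRing R] {q : ℕ} (hq : 2 ≤ q)
    (f : MvPolynomial σ R) :
    ∃ g ∈ restrictDegree σ R (q - 1),
      f - g ∈ Ideal.span (Set.range fun i => X i ^ q - X i) := by
  set J : Ideal (MvPolynomial σ R) := Ideal.span (Set.range fun i => X i ^ q - X i)
  let reduce : ℕ → ℕ := fun k => if k = 0 then 0 else (k - 1) % (q - 1) + 1
  have reduce_le : ∀ k, reduce k ≤ q - 1 := by
    intro k
    by_cases hk : k = 0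
    · simp [reduce, hk]
    · simp only [reduce, hk, if_false]
      have := Nat.mod_lt (k - 1) (show 0 < q - 1 by omega)
      omega
  have mk_X_pow : ∀ i k,
      Ideal.Quotient.mk J (X i ^ k) = Ideal.Quotient.mk J (X i ^ reduce k) := by
    intro i k
    by_cases hk : k = 0
    · simp [reduce, hk]
    · have hX : Ideal.Quotient.mk J (X i) ^ q = Ideal.Quotient.mk J (X i) := by
        rw [← map_pow, Ideal.Quotient.eq]
        exact Ideal.subset_span ⟨i, rfl⟩
      simp only [reduce, hk, if_false, map_pow]
      exact pow_eq_pow_mod_sub_one_add_one hX hk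
  induction f using induction_on' with
  | monomial m a =>
    refine ⟨monomial (m.mapRange reduce (by simp [reduce])) a, ?_, ?_⟩
    · rw [mem_restrictDegree]
      intro s hs i
      rw [(Finset.mem_singleton.mp (support_monomial_subset hs))]
      exact reduce_le _
    · rw [← Ideal.Quotient.eq, monomial_eq, monomial_eq, map_mul, map_mul,
        Finsupp.prod_mapRange_index (by simp), map_finsuppProd, map_finsuppProd]
      exact congrArg _ (Finsupp.prod_congr fun i _ => mk_X_pow i _)
  | add f₁ f₂ ih₁ ih₂ =>
    obtain ⟨g₁, hg₁, h₁⟩ := ih₁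
    obtain ⟨g₂, hg₂, h₂⟩ := ih₂
    refine ⟨g₁ + g₂, add_mem hg₁ hg₂, ?_⟩
    rw [add_sub_add_comm]
    exact add_mem h₁ h₂

section FiniteField

variable {K : Type u} [Field K] [Fintype K]

theorem span_X_pow_card_sub_X_le_vanishingIdeal (V : Set (σ → K)) :
    Ideal.span (Set.range fun i => X i ^ Fintype.card K - X i) ≤ vanishingIdeal K V := by
  rw [Ideal.span_le]
  rintro _ ⟨i, rfl⟩ v _
  simp [FiniteField.pow_card]

theorem mem_span_X_pow_card_sub_X_of_eval_eq_zero [Finite σ] {f : MvPolynomial σ K}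
    (hf : ∀ v, eval v f = 0) :
    f ∈ Ideal.span (Set.range fun i => X i ^ Fintype.card K - X i) := by
  obtain ⟨g, hg, hfg⟩ :=
    exists_mem_restrictDegree_sub_mem_span (Fintype.one_lt_card (α := K)) f
  have hg_eval : ∀ v, eval v g = 0 := fun v => by
    simpa [hf v] using span_X_pow_card_sub_X_le_vanishingIdeal Set.univ hfg v trivial
  rwa [eq_zero_of_eval_eq_zero σ K g hg_eval hg, sub_zero] at hfg

theorem zeroLocus_vanishingIdeal_eq [Fintype σ] (V : Set (σ → K)) :
    zeroLocus K (vanishingIdeal K V) = V := by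
  refine le_antisymm (fun v hv => ?_) (zeroLocus_vanishingIdeal_le V)
  by_contra hvV
  have hind : indicator v ∈ vanishingIdeal K V := fun w hw =>
    eval_indicator_apply_eq_zero w v (ne_of_mem_of_not_mem hw hvV)
  simpa [aeval_eq_eval, eval_indicator_apply_eq_one] using hv _ hind

variable {I : Ideal (MvPolynomial σ K)}

theorem mem_of_forall_eval_eq [Finite σ]
    (hI : Ideal.span (Set.range fun i => X i ^ Fintype.card K - X i) ≤ I)
    {f g : MvPolynomial σ K} (hg : g ∈ I) (hfg : ∀ v, eval v f = eval v g) : f ∈ I := by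
  have hsub : f - g ∈ I := hI (mem_span_X_pow_card_sub_X_of_eval_eq_zero fun v => by
    rw [map_sub, hfg, sub_self])
  simpa using add_mem hsub hg

theorem indicator_mem_of_notMem_zeroLocus [Fintype σ]
    (hI : Ideal.span (Set.range fun i => X i ^ Fintype.card K - X i) ≤ I)
    {v : σ → K} (hv : v ∉ zeroLocus K I) : indicator v ∈ I := by
  obtain ⟨p, hp, hpv⟩ : ∃ p ∈ I, eval v p ≠ 0 := by simpa [aeval_eq_eval] using hv
  refine mem_of_forall_eval_eq hI (I.mul_mem_left (C (eval v p)⁻¹ * indicator v) hp) fun w => ?_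
  by_cases hw : w = v
  · subst hw
    simp [eval_indicator_apply_eq_one, hpv]
  · simp [eval_indicator_apply_eq_zero _ _ hw]

theorem vanishingIdeal_zeroLocus_eq_of_le [Fintype σ]
    (hI : Ideal.span (Set.range fun i => X i ^ Fintype.card K - X i) ≤ I) :
    vanishingIdeal K (zeroLocus K I) = I := by
  classical
  refine le_antisymm (fun f hf => ?_) (le_vanishingIdeal_zeroLocus I)
  refine mem_of_forall_eval_eq hI (g := ∑ v, C (eval v f) * indicator v)
    (sum_mem fun v _ => ?_) ?_
  · by_cases hv : v ∈ zeroLocus K I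
    · simp [show eval v f = 0 from hf v hv]
    · exact I.mul_mem_left _ (indicator_mem_of_notMem_zeroLocus hI hv)
  · intro w
    rw [map_sum, Finset.sum_eq_single w]
    · simp [eval_indicator_apply_eq_one]
    · intro v _ hvw
      simp [eval_indicator_apply_eq_zero _ _ (Ne.symm hvw)]
    · simp

end FiniteField

end MvPolynomial

theorem fieldIdeal_eq_span_X_pow_card_sub_X (n : ℕ) :
    fieldIdeal n = Ideal.span (Set.range fun i => X i ^ Fintype.card (ZMod 2) - X i) := by
  simp only [fieldIdeal, ZMod.card, CharTwo.sub_eq_add]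

theorem pointsVanishingIdeal_eq_vanishingIdeal {n : ℕ} (P : Set (Fin n → ZMod 2)) :
    pointsVanishingIdeal P = vanishingIdeal (ZMod 2) P :=
  rfl

theorem setOf_forall_eval_eq_zero_eq_zeroLocus {n : ℕ}
    (J : Ideal (MvPolynomial (Fin n) (ZMod 2))) :
    {v : Fin n → ZMod 2 | ∀ f ∈ J, eval v f = 0} = zeroLocus (ZMod 2) J :=
  rfl

/-- An ideal containing the field ideal equals the vanishing ideal of its variety;
consequently such ideals correspond bijectively to subsets of the affine space. -/
theorem ideal_eq_pointsVanishingIdeal_variety (n : ℕ)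
    (I : Ideal (MvPolynomial (Fin n) (ZMod 2))) (hI : fieldIdeal n ≤ I) :
    I = pointsVanishingIdeal {v : Fin n → ZMod 2 | ∀ f ∈ I, eval v f = 0} ∧
    Function.Bijective
      (fun J : {J : Ideal (MvPolynomial (Fin n) (ZMod 2)) // fieldIdeal n ≤ J} =>
        ({v : Fin n → ZMod 2 | ∀ f ∈ J.1, eval v f = 0} :
          Set (Fin n → ZMod 2))) := by
  rw [fieldIdeal_eq_span_X_pow_card_sub_X] at hI ⊢
  simp only [pointsVanishingIdeal_eq_vanishingIdeal, setOf_forall_eval_eq_zero_eq_zeroLocus]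
  refine ⟨(vanishingIdeal_zeroLocus_eq_of_le hI).symm, Function.bijective_iff_has_inverse.mpr
    ⟨fun P => ⟨vanishingIdeal (ZMod 2) P, span_X_pow_card_sub_X_le_vanishingIdeal P⟩,
      fun J => Subtype.ext (vanishingIdeal_zeroLocus_eq_of_le J.2),
      zeroLocus_vanishingIdeal_eq⟩⟩
end

section
/- Let Z, O be disjoint subsets of Fin n → ZMod 2 and fix an index i : Fin n. Let Z₀ = {v ∈ Z : v i = 0}, O₀ = {v ∈ O : v i = 0}, Z₁ = {Function.update v i 0 : v ∈ Z, v i = 1}, and O₁ = {Function.update v i 0 : v ∈ O, v i = 1}. Suppose h and h_e are polynomials in MvPolynomial (Fin n) (ZMod 2) in which the variable x_i does not occur, h(z) = 0 for all z ∈ Z₁ and h(o) = 1 for all o ∈ O₁, and h_e(z) = 0 for all z ∈ Z₀ and h_e(o) = 1 for all o ∈ O₀. Then the polynomial p = x_i·(h + h_e) + h_e satisfies p(v) = 0 for all v ∈ Z and p(v) = 1 for all v ∈ O. -/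
open MvPolynomial

lemma eval_update_of_not_mem_vars {n : ℕ} {p : MvPolynomial (Fin n) (ZMod 2)}
    {i : Fin n} (hi : i ∉ p.vars) (v : Fin n → ZMod 2) :
    eval v p = eval (Function.update v i 0) p := by
  refine MvPolynomial.hom_congr_vars ?_ ?_ rfl
  · ext c; simp
  · intro j hj _
    have hji : j ≠ i := fun h => hi (h ▸ hj)
    simp [Function.update_apply, hji]

/-- Correctness of the recursive interpolation step: if `h` interpolates the subset-1
points and `he` the subset-0 points (with `x_i` occurring in neither), then
`x_i * (h + he) + he` interpolates the whole partial function. -/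
theorem interpolation_step (n : ℕ) (Z O : Set (Fin n → ZMod 2)) (hZO : Disjoint Z O)
    (i : Fin n) (h he : MvPolynomial (Fin n) (ZMod 2))
    (hhv : i ∉ h.vars) (hhev : i ∉ he.vars)
    (hhZ : ∀ z ∈ {w : Fin n → ZMod 2 | ∃ v ∈ Z, v i = 1 ∧ w = Function.update v i 0},
      eval z h = 0)
    (hhO : ∀ o ∈ {w : Fin n → ZMod 2 | ∃ v ∈ O, v i = 1 ∧ w = Function.update v i 0},
      eval o h = 1)
    (hheZ : ∀ z ∈ {v ∈ Z | v i = 0}, eval z he = 0)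
    (hheO : ∀ o ∈ {v ∈ O | v i = 0}, eval o he = 1) :
    (∀ v ∈ Z, eval v (X i * (h + he) + he) = 0) ∧
    (∀ v ∈ O, eval v (X i * (h + he) + he) = 1) := by
  have key : ∀ v : Fin n → ZMod 2,
      eval v (X i * (h + he) + he) =
        v i * (eval (Function.update v i 0) h + eval (Function.update v i 0) he)
          + eval (Function.update v i 0) he := by
    intro v
    rw [← eval_update_of_not_mem_vars hhv, ← eval_update_of_not_mem_vars hhev]
    simp
  constructor
  · intro v hv
    rcases (by decide : ∀ x : ZMod 2, x = 0 ∨ x = 1) (v i) with h0 | h1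
    · have huv : Function.update v i 0 = v := by
        funext j; rcases eq_or_ne j i with rfl | hj <;> simp [Function.update_apply, *]
      rw [key, huv, h0, hheZ v ⟨hv, h0⟩]; ring
    · rw [key, h1, hhZ _ ⟨v, hv, h1, rfl⟩]
      have : ∀ x : ZMod 2, 1 * (0 + x) + x = 0 := by decide
      exact this _
  · intro v hv
    rcases (by decide : ∀ x : ZMod 2, x = 0 ∨ x = 1) (v i) with h0 | h1
    · have huv : Function.update v i 0 = v := by
        funext j; rcases eq_or_ne j i with rfl | hj <;> simp [Function.update_apply, *]
      rw [key, huv, h0, hheO v ⟨hv, h0⟩]; ring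
    · rw [key, h1, hhO _ ⟨v, hv, h1, rfl⟩]
      have : ∀ x : ZMod 2, 1 * (1 + x) + x = 1 := by decide
      exact this _
end

section
/- Let P be a finite subset of Fin n → ZMod 2. For f : P → ZMod 2 let NF(f) denote the unique Boolean polynomial agreeing with f on P that is minimal with respect to the extended lex ordering among all Boolean polynomials agreeing with f on P. Then NF is additive: for all f, g : P → ZMod 2, NF(f + g) = NF(f) + NF(g), where f + g is the pointwise sum in ZMod 2. -/
open MvPolynomial

lemma support_add_eq {n : ℕ} (a b : MvPolynomial (Fin n) (ZMod 2)) :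
    (a + b).support = symmDiff a.support b.support := by
  have h : ∀ x y : ZMod 2, x + y ≠ 0 ↔ ((x ≠ 0 ∧ ¬ y ≠ 0) ∨ (y ≠ 0 ∧ ¬ x ≠ 0)) := by decide
  ext m
  simp only [MvPolynomial.mem_support_iff, MvPolynomial.coeff_add, Finset.mem_symmDiff,
    MvPolynomial.mem_support_iff]
  exact h _ _

lemma isBooleanPoly_add {n : ℕ} {a b : MvPolynomial (Fin n) (ZMod 2)}
    (ha : IsBooleanPoly a) (hb : IsBooleanPoly b) : IsBooleanPoly (a + b) := by
  intro m hm i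
  rcases Finset.mem_union.mp (MvPolynomial.support_add hm) with h | h
  · exact ha m h i
  · exact hb m h i

/-- If `p` is extended-lex-minimal among Boolean polynomials agreeing with `h` on `P`,
then the lex-leading monomial of any nonzero Boolean polynomial vanishing on `P`
is not in the support of `p`. -/
lemma no_lm {n : ℕ} {P : Finset (Fin n → ZMod 2)} {h : ↑P → ZMod 2}
    {p : MvPolynomial (Fin n) (ZMod 2)} (hp : IsBooleanPoly p)
    (hpf : ∀ v : ↑P, eval (v : Fin n → ZMod 2) p = h v)
    (hpmin : ∀ p' : MvPolynomial (Fin n) (ZMod 2), IsBooleanPoly p' →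
      (∀ v : ↑P, eval (v : Fin n → ZMod 2) p' = h v) → ExtLexLe p p')
    {s : MvPolynomial (Fin n) (ZMod 2)} (hs : IsBooleanPoly s)
    (hs0 : ∀ v : ↑P, eval (v : Fin n → ZMod 2) s = 0) (hsne : s ≠ 0)
    {t : Fin n →₀ ℕ} (ht : t ∈ s.support)
    (htmax : ∀ t' ∈ s.support, toLex t' ≤ toLex t) : t ∉ p.support := by
  intro htp
  have hle := hpmin (p + s) (isBooleanPoly_add hp hs)
    (fun v => by rw [map_add, hpf v, hs0 v, add_zero])
  have hsupp : symmDiff p.support (p + s).support = s.support := by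
    rw [support_add_eq, symmDiff_symmDiff_cancel_left]
  rcases hle with heq | ⟨m, hm, hmax⟩
  · exact hsne (left_eq_add.mp heq)
  · rw [hsupp] at hmax
    rcases Finset.mem_sdiff.mp hm with ⟨hm1, hm2⟩
    have hms : m ∈ s.support := by
      rw [← hsupp]
      exact Finset.mem_symmDiff.mpr (Or.inr ⟨hm1, hm2⟩)
    have h1 : toLex t ≤ toLex m := hmax t ht
    have h2 : toLex m ≤ toLex t := htmax m hms
    have : m = t := toLex.injective (le_antisymm h2 h1)
    exact hm2 (this ▸ htp)

/-- The extended-lex-minimal interpolating normal form is additive: the minimal Boolean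
polynomial agreeing with `f + g` on `P` is the sum of the minimal ones agreeing with `f`
and with `g`. -/
theorem minimal_interpolation_additive (n : ℕ) (P : Finset (Fin n → ZMod 2))
    (f g : ↑P → ZMod 2) (p q r : MvPolynomial (Fin n) (ZMod 2))
    (hp : IsBooleanPoly p) (hq : IsBooleanPoly q) (hr : IsBooleanPoly r)
    (hpf : ∀ v : ↑P, eval (v : Fin n → ZMod 2) p = f v)
    (hpmin : ∀ p' : MvPolynomial (Fin n) (ZMod 2), IsBooleanPoly p' →
      (∀ v : ↑P, eval (v : Fin n → ZMod 2) p' = f v) → ExtLexLe p p')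
    (hqg : ∀ v : ↑P, eval (v : Fin n → ZMod 2) q = g v)
    (hqmin : ∀ q' : MvPolynomial (Fin n) (ZMod 2), IsBooleanPoly q' →
      (∀ v : ↑P, eval (v : Fin n → ZMod 2) q' = g v) → ExtLexLe q q')
    (hrfg : ∀ v : ↑P, eval (v : Fin n → ZMod 2) r = f v + g v)
    (hrmin : ∀ r' : MvPolynomial (Fin n) (ZMod 2), IsBooleanPoly r' →
      (∀ v : ↑P, eval (v : Fin n → ZMod 2) r' = f v + g v) → ExtLexLe r r') :
    r = p + q := by
  by_contra hne
  set s : MvPolynomial (Fin n) (ZMod 2) := r + (p + q) with hs_def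
  have hsB : IsBooleanPoly s := isBooleanPoly_add hr (isBooleanPoly_add hp hq)
  have hs0 : ∀ v : ↑P, eval (v : Fin n → ZMod 2) s = 0 := by
    intro v
    have h2 : ∀ x y : ZMod 2, (x + y) + (x + y) = 0 := by decide
    simp only [hs_def, map_add, hrfg v, hpf v, hqg v]
    exact h2 _ _
  have hsne : s ≠ 0 := by
    intro h0
    apply hne
    have : r + (p + q) + (p + q) = 0 + (p + q) := by rw [← hs_def, h0]
    have hpq : (p + q) + (p + q) = 0 := by
      have : (1 + 1 : ZMod 2) = 0 := by decide
      calc (p + q) + (p + q) = (1 + 1 : ZMod 2) • (p + q) := by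
            rw [add_smul, one_smul]
        _ = 0 := by rw [this, zero_smul]
    rw [add_assoc, hpq, add_zero, zero_add] at this
    exact this
  have hsupp : s.support = symmDiff r.support (p + q).support := support_add_eq r (p + q)
  obtain ⟨t, ht, htmax⟩ := Finset.exists_max_image s.support (toLex ·) (by
    rw [Finset.nonempty_iff_ne_empty]
    exact fun h => hsne (MvPolynomial.support_eq_empty.mp h))
  have ht' := ht
  rw [hsupp] at ht'
  rcases Finset.mem_symmDiff.mp ht' with ⟨htr, -⟩ | ⟨htpq, -⟩
  · exact no_lm hr hrfg hrmin hsB hs0 hsne ht htmax htr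
  · rcases Finset.mem_union.mp (MvPolynomial.support_add htpq) with htp | htq
    · exact no_lm hp hpf hpmin hsB hs0 hsne ht htmax htp
    · exact no_lm hq hqg hqmin hsB hs0 hsne ht htmax htq
end

section
/- Let P be a finite subset of Fin n → ZMod 2 and let t be a standard monomial of the vanishing ideal I(P) with respect to the lexicographic monomial order. For a subset Z ⊆ P let NF(Z) denote the extended-lex-minimal Boolean polynomial taking value 0 on Z and value 1 on P \ Z. Then the number of subsets Z ⊆ P such that t lies in the support of NF(Z) equals 2^(|P| − 1). -/
open MvPolynomial

section Aux

variable {n : ℕ}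

lemma zmod2_add_eq_zero_iff : ∀ a b : ZMod 2, a + b = 0 ↔ a = b := by decide

lemma zmod2_ne_zero : ∀ a : ZMod 2, a ≠ 0 → a = 1 := by decide

lemma zmod2_sq_add : ∀ a : ZMod 2, a ^ 2 + a = 0 := by decide

lemma zmod2_add_one : ∀ a : ZMod 2, (a + 1 ≠ 0 ↔ ¬ a ≠ 0) := by decide

lemma poly_eq_of_add_eq_zero {f g : MvPolynomial (Fin n) (ZMod 2)} (h : f + g = 0) :
    f = g := by
  ext m
  have := congrArg (coeff m) h
  rw [coeff_add, coeff_zero] at this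
  exact (zmod2_add_eq_zero_iff _ _).1 this

lemma poly_add_self (f : MvPolynomial (Fin n) (ZMod 2)) : f + f = 0 := by
  ext m
  rw [coeff_add, coeff_zero]
  exact (zmod2_add_eq_zero_iff _ _).2 rfl

lemma isBooleanPoly_add_s16 {f g : MvPolynomial (Fin n) (ZMod 2)}
    (hf : IsBooleanPoly f) (hg : IsBooleanPoly g) : IsBooleanPoly (f + g) := by
  classical
  intro m hm i
  rcases Finset.mem_union.1 (MvPolynomial.support_add hm) with h | h
  exacts [hf m h i, hg m h i]

lemma support_add_eq_symmDiff (f g : MvPolynomial (Fin n) (ZMod 2)) :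
    (f + g).support = symmDiff f.support g.support := by
  classical
  ext m
  simp only [mem_support_iff, Finset.mem_symmDiff, mem_support_iff, coeff_add]
  revert m
  intro m
  generalize coeff m f = a
  generalize coeff m g = b
  revert a b
  decide

/-- Membership in the elements-of-the-kernel set: Boolean poly vanishing on `P`,
nonzero, with lex leading monomial `m`. -/
def InL (P : Finset (Fin n → ZMod 2)) (m : Fin n →₀ ℕ) : Prop :=
  ∃ f : MvPolynomial (Fin n) (ZMod 2), IsBooleanPoly f ∧ (∀ p ∈ P, eval p f = 0) ∧
    f ≠ 0 ∧ IsLeadingMonomial MonomialOrder.lex f m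

lemma nf_unique {P : Finset (Fin n → ZMod 2)} {g h : MvPolynomial (Fin n) (ZMod 2)}
    (hg : IsBooleanPoly g) (hh : IsBooleanPoly h)
    (hgL : ∀ m ∈ g.support, ¬ InL P m) (hhL : ∀ m ∈ h.support, ¬ InL P m)
    (hv : ∀ p ∈ P, eval p g = eval p h) : g = h := by
  classical
  by_contra hne
  have hd0 : g + h ≠ 0 := fun h0 => hne (poly_eq_of_add_eq_zero h0)
  have hsupp : (g + h).support.Nonempty :=
    Finset.nonempty_iff_ne_empty.2 (fun he => hd0 (MvPolynomial.support_eq_empty.1 he))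
  obtain ⟨m, hm, hmax⟩ :=
    Finset.exists_max_image (g + h).support (fun u => MonomialOrder.lex.toSyn u) hsupp
  have hInL : InL P m := by
    refine ⟨g + h, isBooleanPoly_add_s16 hg hh, ?_, hd0, hm, hmax⟩
    intro p hp
    rw [map_add, hv p hp]
    exact (zmod2_add_eq_zero_iff _ _).2 rfl
  have : m ∈ g.support ∨ m ∈ h.support := by
    by_contra hcon
    push_neg at hcon
    rw [mem_support_iff, coeff_add, notMem_support_iff.1 hcon.1,
      notMem_support_iff.1 hcon.2, add_zero] at hm
    exact hm rfl
  rcases this with h' | h'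
  exacts [hgL m h' hInL, hhL m h' hInL]

end Aux

/-- For a standard monomial `t` of the vanishing ideal of `P` (w.r.t. lex), exactly
`2 ^ (|P| - 1)` of the subsets `Z ⊆ P` produce a minimal interpolation polynomial
`NF Z` whose support contains `t`. -/
theorem card_subsets_support_stdMonomial (n : ℕ) (P : Finset (Fin n → ZMod 2))
    (t : Fin n →₀ ℕ)
    (ht : IsStdMonomial MonomialOrder.lex (pointsVanishingIdeal (↑P : Set (Fin n → ZMod 2))) t)
    (NF : Finset (Fin n → ZMod 2) → MvPolynomial (Fin n) (ZMod 2))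
    (hNF : ∀ Z ⊆ P, IsBooleanPoly (NF Z) ∧
      (∀ z ∈ Z, eval z (NF Z) = 0) ∧ (∀ o ∈ P \ Z, eval o (NF Z) = 1) ∧
      ∀ q : MvPolynomial (Fin n) (ZMod 2), IsBooleanPoly q →
        (∀ z ∈ Z, eval z q = 0) → (∀ o ∈ P \ Z, eval o q = 1) → ExtLexLe (NF Z) q) :
    {Z : Finset (Fin n → ZMod 2) | Z ⊆ P ∧ t ∈ (NF Z).support}.ncard
      = 2 ^ (P.card - 1) := by
  classical
  -- the support of any `NF Z` avoids leading monomials of Boolean polys vanishing on `P`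
  have avoidL : ∀ Z ⊆ P, ∀ m ∈ (NF Z).support, ¬ InL P m := by
    intro Z hZ m hm
    rintro ⟨f, hfB, hfv, hf0, hft, hlead⟩
    obtain ⟨hB, h0, h1, hmin⟩ := hNF Z hZ
    have hq0 : ∀ z ∈ Z, eval z (NF Z + f) = 0 := by
      intro z hz
      rw [map_add, h0 z hz, hfv z (hZ hz), add_zero]
    have hq1 : ∀ o ∈ P \ Z, eval o (NF Z + f) = 1 := by
      intro o ho
      rw [map_add, h1 o ho, hfv o (Finset.mem_sdiff.1 ho).1, add_zero]
    rcases hmin _ (isBooleanPoly_add_s16 hB hfB) hq0 hq1 with heq | hlt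
    · exact hf0 (left_eq_add.1 heq)
    · obtain ⟨m', hm'mem, hm'max⟩ := hlt
      have hsum : NF Z + (NF Z + f) = f := by
        rw [← add_assoc, poly_add_self, zero_add]
      have hsymm : symmDiff (NF Z).support (NF Z + f).support = f.support := by
        rw [← support_add_eq_symmDiff, hsum]
      have hm'f : m' ∈ f.support := by
        rw [← hsymm]
        exact Finset.mem_symmDiff.2 (Or.inr ⟨(Finset.mem_sdiff.1 hm'mem).1,
          (Finset.mem_sdiff.1 hm'mem).2⟩)
      have hmf : m ∈ symmDiff (NF Z).support (NF Z + f).support := by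
        rw [hsymm]; exact hft
      have hle1 : toLex m ≤ toLex m' := hm'max m hmf
      have hle2 : toLex m' ≤ toLex m := hlead m' hm'f
      have : m' = m := toLex.injective (le_antisymm hle2 hle1)
      exact (Finset.mem_sdiff.1 hm'mem).2 (this ▸ hm)
  -- `t` is not `InL P`
  have htL : ¬ InL P t := by
    rintro ⟨f, hfB, hfv, hf0, hlead⟩
    exact ht ⟨f, fun p hp => hfv p hp, hlead⟩
  -- `t` is Boolean
  have htB : ∀ i, t i ≤ 1 := by
    intro i
    by_contra hgt
    push_neg at hgt
    set u : Fin n →₀ ℕ := t - Finsupp.single i 2 with hu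
    have hle : Finsupp.single i 2 ≤ t := by
      rw [Finsupp.single_le_iff]; omega
    have hut : u + Finsupp.single i 2 = t := tsub_add_cancel_of_le hle
    set t' : Fin n →₀ ℕ := u + Finsupp.single i 1 with ht'def
    have hti : t i = u i + 2 := by
      conv_lhs => rw [← hut]
      simp [Finsupp.add_apply, Finsupp.single_apply]
    have ht'i : t' i = u i + 1 := by
      simp [ht'def, Finsupp.add_apply, Finsupp.single_apply]
    have htne : t' ≠ t := by
      intro h
      have := DFunLike.congr_fun h i
      rw [hti, ht'i] at this
      omega
    set f : MvPolynomial (Fin n) (ZMod 2) := monomial t 1 + monomial t' 1 with hfdef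
    have hfact : f = (X i ^ 2 + X i) * monomial u 1 := by
      rw [hfdef, add_mul, X_pow_eq_monomial, ← pow_one (X i), X_pow_eq_monomial,
        monomial_mul, monomial_mul, one_mul]
      rw [add_comm (Finsupp.single i 2) u, hut, add_comm (Finsupp.single i 1) u]
    have hfI : ∀ p ∈ (↑P : Set (Fin n → ZMod 2)), eval p f = 0 := by
      intro p _
      rw [hfact, map_mul, map_add, map_pow, eval_X, zmod2_sq_add, zero_mul]
    have hct : coeff t f = 1 := by
      rw [hfdef, coeff_add, coeff_monomial, coeff_monomial, if_pos rfl, if_neg htne,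
        add_zero]
    have htf : t ∈ f.support := by
      rw [mem_support_iff, hct]; exact one_ne_zero
    have hsub : f.support ⊆ {t, t'} := by
      intro m hm
      have := MvPolynomial.support_add hm
      rw [support_monomial, support_monomial, if_neg one_ne_zero, if_neg one_ne_zero] at this
      simpa using this
    refine ht ⟨f, hfI, htf, ?_⟩
    intro t'' ht''
    rcases Finset.mem_insert.1 (hsub ht'') with rfl | h
    · exact le_refl _
    · rw [Finset.mem_singleton] at h
      subst h
      apply MonomialOrder.lex.toSyn_monotone
      rw [Finsupp.le_def]
      intro j
      rw [ht'def, ← hut]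
      simp only [Finsupp.add_apply, Finsupp.single_apply]
      split <;> omega
  -- `P` is nonempty
  have hPne : P.Nonempty := by
    rcases P.eq_empty_or_nonempty with h | h
    · exfalso
      subst h
      refine ht ⟨monomial t 1, ?_, ?_, ?_⟩
      · intro p hp; simp at hp
      · rw [mem_support_iff, coeff_monomial, if_pos rfl]; exact one_ne_zero
      · intro t'' ht''
        rw [support_monomial, if_neg one_ne_zero, Finset.mem_singleton] at ht''
        subst ht''
        exact le_refl _
    · exact h
  -- `NF Z₀ = monomial t 1` for a suitable `Z₀`
  set g0 : MvPolynomial (Fin n) (ZMod 2) := monomial t 1 with hg0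
  have hg0supp : g0.support = {t} := by
    rw [hg0, support_monomial, if_neg one_ne_zero]
  set Z₀ : Finset (Fin n → ZMod 2) := P.filter (fun p => eval p g0 = 0) with hZ₀def
  have hZ₀P : Z₀ ⊆ P := Finset.filter_subset _ _
  have hNFZ₀ : NF Z₀ = g0 := by
    apply nf_unique (P := P) (hNF Z₀ hZ₀P).1
    · intro m hm i
      rw [hg0supp, Finset.mem_singleton] at hm
      subst hm; exact htB i
    · exact avoidL Z₀ hZ₀P
    · intro m hm
      rw [hg0supp, Finset.mem_singleton] at hm
      subst hm; exact htL
    · intro p hp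
      by_cases hpz : eval p g0 = 0
      · rw [hpz]
        exact (hNF Z₀ hZ₀P).2.1 p (Finset.mem_filter.2 ⟨hp, hpz⟩)
      · rw [zmod2_ne_zero _ hpz]
        exact (hNF Z₀ hZ₀P).2.2.1 p
          (Finset.mem_sdiff.2 ⟨hp, fun hc => hpz (Finset.mem_filter.1 hc).2⟩)
  have hcoefft : coeff t (NF Z₀) = 1 := by
    rw [hNFZ₀, hg0, coeff_monomial, if_pos rfl]
  -- "linearity": NF (P \ (Z ∆ Z₀)) = NF Z + NF Z₀
  have hlin : ∀ Z ⊆ P, NF (P \ symmDiff Z Z₀) = NF Z + NF Z₀ := by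
    intro Z hZ
    have hW : (P \ symmDiff Z Z₀) ⊆ P := Finset.sdiff_subset
    apply nf_unique (P := P) (hNF _ hW).1
      (isBooleanPoly_add_s16 (hNF Z hZ).1 (hNF Z₀ hZ₀P).1) (avoidL _ hW)
    · intro m hm
      rcases Finset.mem_union.1 (MvPolynomial.support_add hm) with h | h
      exacts [avoidL Z hZ m h, avoidL Z₀ hZ₀P m h]
    · intro p hp
      rw [map_add]
      by_cases h1 : p ∈ Z <;> by_cases h2 : p ∈ Z₀
      · have hpw : p ∈ P \ symmDiff Z Z₀ :=
          Finset.mem_sdiff.2 ⟨hp, by simp [Finset.mem_symmDiff, h1, h2]⟩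
        rw [(hNF _ hW).2.1 p hpw, (hNF Z hZ).2.1 p h1, (hNF Z₀ hZ₀P).2.1 p h2, add_zero]
      · have hpw : p ∈ P \ (P \ symmDiff Z Z₀) :=
          Finset.mem_sdiff.2 ⟨hp, by simp [Finset.mem_sdiff, Finset.mem_symmDiff, hp, h1, h2]⟩
        rw [(hNF _ hW).2.2.1 p hpw, (hNF Z hZ).2.1 p h1,
          (hNF Z₀ hZ₀P).2.2.1 p (Finset.mem_sdiff.2 ⟨hp, h2⟩), zero_add]
      · have hpw : p ∈ P \ (P \ symmDiff Z Z₀) :=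
          Finset.mem_sdiff.2 ⟨hp, by simp [Finset.mem_sdiff, Finset.mem_symmDiff, hp, h1, h2]⟩
        rw [(hNF _ hW).2.2.1 p hpw, (hNF Z hZ).2.2.1 p (Finset.mem_sdiff.2 ⟨hp, h1⟩),
          (hNF Z₀ hZ₀P).2.1 p h2, add_zero]
      · have hpw : p ∈ P \ symmDiff Z Z₀ :=
          Finset.mem_sdiff.2 ⟨hp, by simp [Finset.mem_symmDiff, h1, h2]⟩
        rw [(hNF _ hW).2.1 p hpw, (hNF Z hZ).2.2.1 p (Finset.mem_sdiff.2 ⟨hp, h1⟩),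
          (hNF Z₀ hZ₀P).2.2.1 p (Finset.mem_sdiff.2 ⟨hp, h2⟩)]
        decide
  -- flipping lemma
  have hflip : ∀ Z ⊆ P, (t ∈ (NF (P \ symmDiff Z Z₀)).support ↔ t ∉ (NF Z).support) := by
    intro Z hZ
    rw [mem_support_iff, hlin Z hZ, coeff_add, hcoefft, mem_support_iff]
    exact zmod2_add_one _
  -- involution lemma
  have hσσ : ∀ Z ⊆ P, P \ symmDiff (P \ symmDiff Z Z₀) Z₀ = Z := by
    intro Z hZ
    ext p
    have h1 := @hZ p
    have h2 := @hZ₀P p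
    simp only [Finset.mem_sdiff, Finset.mem_symmDiff] at *
    tauto
  -- counting
  set A := P.powerset.filter (fun Z => t ∈ (NF Z).support) with hA
  set B := P.powerset.filter (fun Z => ¬ t ∈ (NF Z).support) with hB
  have hset : {Z : Finset (Fin n → ZMod 2) | Z ⊆ P ∧ t ∈ (NF Z).support} = ↑A := by
    ext Z
    simp [hA, Finset.mem_powerset]
  rw [hset, Set.ncard_coe_finset]
  have hcard : A.card = B.card := by
    apply Finset.card_bij (fun Z _ => P \ symmDiff Z Z₀)
    · intro Z hZA
      obtain ⟨hZP, hZt⟩ := Finset.mem_filter.1 hZA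
      rw [Finset.mem_powerset] at hZP
      refine Finset.mem_filter.2 ⟨Finset.mem_powerset.2 Finset.sdiff_subset, ?_⟩
      intro hc
      exact (hflip Z hZP).1 hc hZt
    · intro Z₁ hZ₁ Z₂ hZ₂ heq
      have h₁ := Finset.mem_powerset.1 (Finset.mem_filter.1 hZ₁).1
      have h₂ := Finset.mem_powerset.1 (Finset.mem_filter.1 hZ₂).1
      rw [← hσσ Z₁ h₁, ← hσσ Z₂ h₂, heq]
    · intro Y hYB
      obtain ⟨hYP, hYt⟩ := Finset.mem_filter.1 hYB
      rw [Finset.mem_powerset] at hYP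
      refine ⟨P \ symmDiff Y Z₀, ?_, hσσ Y hYP⟩
      refine Finset.mem_filter.2 ⟨Finset.mem_powerset.2 Finset.sdiff_subset, ?_⟩
      exact (hflip Y hYP).2 hYt
  have htot : A.card + B.card = 2 ^ P.card := by
    rw [hA, hB, Finset.card_filter_add_card_filter_not, Finset.card_powerset]
  have hP1 : 1 ≤ P.card := Finset.card_pos.2 hPne
  have hpow : 2 ^ P.card = 2 * 2 ^ (P.card - 1) := by
    conv_lhs => rw [← Nat.succ_pred_eq_of_pos hP1]
    rw [pow_succ, Nat.pred_eq_sub_one, mul_comm]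
  omega
end
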